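/- arXiv:math/0409376 — 6 statements merged into one kernel-verified Lean document; each statement's English description precedes it below -/
import Mathlib

section
/- Let g ≥ 1 and 1 ≤ k ≤ g. Then the polynomial e_k² · e_{k+1} · e_{k+2} ⋯ e_g (the square of the k-th elementary symmetric polynomial times the product of all higher elementary symmetric polynomials in x₁,…,x_g) belongs to the ideal I_g. -/
set_option maxRecDepth 4000

open MvPolynomial

lemma coeff_prod_one_add {σ R : Type*} [CommRing R] (s : Finset σ) (f : σ → R)
    (d n : ℕ) (hd : 0 < d) :
    (∏ i ∈ s, (1 + Polynomial.C (f i) * Polynomial.X ^ d)).coeff (d * n) =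
      ∑ t ∈ s.powersetCard n, ∏ i ∈ t, f i := by
  classical
  have h1 : ∀ t : Finset σ, (∏ i ∈ t, (Polynomial.C (f i) * Polynomial.X ^ d)) =
      Polynomial.C (∏ i ∈ t, f i) * Polynomial.X ^ (d * t.card) := by
    intro t
    rw [Finset.prod_mul_distrib, Finset.prod_pow_eq_pow_sum, map_prod]
    simp [mul_comm d, Finset.sum_const, Nat.smul_one_eq_cast]
  simp_rw [add_comm (1 : Polynomial R), Finset.prod_add, Finset.prod_const_one, mul_one, h1,
    Polynomial.finset_sum_coeff, Polynomial.coeff_C_mul, Polynomial.coeff_X_pow]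
  rw [Finset.powersetCard_eq_filter, Finset.sum_filter]
  apply Finset.sum_congr rfl
  intro t _
  have : d * n = d * t.card ↔ t.card = n := by
    constructor
    · intro h; exact (Nat.eq_of_mul_eq_mul_left hd h.symm)
    · intro h; rw [h]
  simp only [mul_ite, mul_one, mul_zero]
  split_ifs with h1' h2 h2
  · rfl
  · exact absurd (this.mp h1') h2
  · exact absurd (this.mpr h2) h1'
  · rfl


lemma my_prod_neg {σ : Type*} [DecidableEq σ] {R : Type*} [CommRing R] (t : Finset σ) (f : σ → R) :
    ∏ i ∈ t, (-f i) = (-1) ^ t.card * ∏ i ∈ t, f i := by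
  induction t using Finset.induction_on with
  | empty => simp
  | @insert a s h ih =>
    rw [Finset.prod_insert h, Finset.prod_insert h, Finset.card_insert_of_notMem h, ih]
    ring


/-- `esq g k` is `e_k(x₁²,…,x_g²)`, the `k`-th elementary symmetric polynomial
evaluated at the squares of the variables. -/
noncomputable def esq (g k : ℕ) : MvPolynomial (Fin g) ℂ :=
  aeval (fun i : Fin g => (X i : MvPolynomial (Fin g) ℂ) ^ 2) (esymm (Fin g) ℂ k)

/-- The ideal `I_g` generated by `e_k(x₁²,…,x_g²)` for `1 ≤ k ≤ g`, i.e. by the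
homogeneous components (up to sign) of `∏ᵢ (1 - xᵢ²) - 1`. -/
noncomputable def Ig (g : ℕ) : Ideal (MvPolynomial (Fin g) ℂ) :=
  Ideal.span {p | ∃ k : ℕ, 1 ≤ k ∧ k ≤ g ∧ p = esq g k}

lemma esymm_eq_zero_of_gt (g m : ℕ) (h : g < m) : esymm (Fin g) ℂ m = 0 := by
  rw [esymm, Finset.powersetCard_eq_empty.mpr (by simpa using h), Finset.sum_empty]

lemma coeff_P (g n : ℕ) :
    (∏ i : Fin g, (1 + Polynomial.C (X i : MvPolynomial (Fin g) ℂ) * Polynomial.X)).coeff n =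
      esymm (Fin g) ℂ n := by
  have := coeff_prod_one_add (Finset.univ : Finset (Fin g)) (fun i => (X i : MvPolynomial (Fin g) ℂ)) 1 n one_pos
  simpa [esymm] using this

lemma coeff_Q (g n : ℕ) :
    (∏ i : Fin g, (1 - Polynomial.C (X i : MvPolynomial (Fin g) ℂ) * Polynomial.X)).coeff n =
      (-1) ^ n * esymm (Fin g) ℂ n := by
  have := coeff_prod_one_add (Finset.univ : Finset (Fin g)) (fun i => -(X i : MvPolynomial (Fin g) ℂ)) 1 n one_pos
  simp only [one_mul, pow_one, map_neg, neg_mul, ← sub_eq_add_neg] at this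
  rw [this, esymm, Finset.mul_sum]
  apply Finset.sum_congr rfl
  intro t ht
  rw [my_prod_neg, (Finset.mem_powersetCard.mp ht).2]

lemma coeff_S (g n : ℕ) :
    (∏ i : Fin g, (1 - Polynomial.C ((X i : MvPolynomial (Fin g) ℂ) ^ 2) * Polynomial.X ^ 2)).coeff (2 * n) =
      (-1) ^ n * esq g n := by
  have := coeff_prod_one_add (Finset.univ : Finset (Fin g)) (fun i => -((X i : MvPolynomial (Fin g) ℂ) ^ 2)) 2 n two_pos
  simp only [map_neg, neg_mul, ← sub_eq_add_neg] at this
  rw [this, esq, esymm, map_sum, Finset.mul_sum]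
  apply Finset.sum_congr rfl
  intro t ht
  rw [map_prod, my_prod_neg, (Finset.mem_powersetCard.mp ht).2]
  simp_rw [aeval_X]

lemma key (g k : ℕ) :
    ∑ p ∈ Finset.HasAntidiagonal.antidiagonal (2 * k),
        esymm (Fin g) ℂ p.1 * ((-1) ^ p.2 * esymm (Fin g) ℂ p.2) =
      (-1) ^ k * esq g k := by
  have hPQ : (∏ i : Fin g, (1 + Polynomial.C (X i : MvPolynomial (Fin g) ℂ) * Polynomial.X)) *
      (∏ i : Fin g, (1 - Polynomial.C (X i : MvPolynomial (Fin g) ℂ) * Polynomial.X)) =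
      ∏ i : Fin g, (1 - Polynomial.C ((X i : MvPolynomial (Fin g) ℂ) ^ 2) * Polynomial.X ^ 2) := by
    rw [← Finset.prod_mul_distrib]
    apply Finset.prod_congr rfl
    intro i _
    rw [map_pow]
    ring
  have := congrArg (fun p => Polynomial.coeff p (2 * k)) hPQ
  rw [Polynomial.coeff_mul, coeff_S] at this
  rw [← this]
  apply Finset.sum_congr rfl
  intro p _
  rw [coeff_P, coeff_Q]


lemma esq_mem (g k : ℕ) (hk : 1 ≤ k) (hkg : k ≤ g) : esq g k ∈ Ig g :=
  Ideal.subset_span ⟨k, hk, hkg, rfl⟩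

lemma term_mem (g k m : ℕ) (hm : k < m)
    (IH : ∀ m', k < m' → m' ≤ g →
      esymm (Fin g) ℂ m' ^ 2 * ∏ j ∈ Finset.Icc (m' + 1) g, esymm (Fin g) ℂ j ∈ Ig g)
    (c : MvPolynomial (Fin g) ℂ) :
    c * esymm (Fin g) ℂ m * ∏ j ∈ Finset.Icc (k + 1) g, esymm (Fin g) ℂ j ∈ Ig g := by
  rcases le_or_gt m g with hg' | hg'
  · have hmem : m ∈ Finset.Icc (k + 1) g := by simp; omega
    have hsub : Finset.Icc (m + 1) g ⊆ (Finset.Icc (k + 1) g).erase m := by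
      intro x hx
      simp only [Finset.mem_Icc, Finset.mem_erase] at hx ⊢
      omega
    rw [← Finset.mul_prod_erase _ _ hmem, ← Finset.prod_sdiff hsub]
    have hre : c * esymm (Fin g) ℂ m *
        (esymm (Fin g) ℂ m *
          ((∏ j ∈ (Finset.Icc (k + 1) g).erase m \ Finset.Icc (m + 1) g, esymm (Fin g) ℂ j) *
            ∏ j ∈ Finset.Icc (m + 1) g, esymm (Fin g) ℂ j)) =
        (c * ∏ j ∈ (Finset.Icc (k + 1) g).erase m \ Finset.Icc (m + 1) g, esymm (Fin g) ℂ j) *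
          (esymm (Fin g) ℂ m ^ 2 * ∏ j ∈ Finset.Icc (m + 1) g, esymm (Fin g) ℂ j) := by
      ring
    rw [hre]
    exact Ideal.mul_mem_left _ _ (IH m hm hg')
  · rw [esymm_eq_zero_of_gt g m hg', mul_zero, zero_mul]
    exact Ideal.zero_mem _

lemma step (g k : ℕ) (hk : 1 ≤ k) (hkg : k ≤ g)
    (IH : ∀ m', k < m' → m' ≤ g →
      esymm (Fin g) ℂ m' ^ 2 * ∏ j ∈ Finset.Icc (m' + 1) g, esymm (Fin g) ℂ j ∈ Ig g) :
    esymm (Fin g) ℂ k ^ 2 * ∏ j ∈ Finset.Icc (k + 1) g, esymm (Fin g) ℂ j ∈ Ig g := by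
  have h := key g k
  have hmem : ((k, k) : ℕ × ℕ) ∈ Finset.HasAntidiagonal.antidiagonal (2 * k) := by
    simp [two_mul]
  rw [← Finset.add_sum_erase _ _ hmem] at h
  set S := ∑ p ∈ (Finset.HasAntidiagonal.antidiagonal (2 * k)).erase (k, k),
      esymm (Fin g) ℂ p.1 * ((-1) ^ p.2 * esymm (Fin g) ℂ p.2) with hS
  have e1 : ((-1 : MvPolynomial (Fin g) ℂ) ^ k) * ((-1) ^ k) = 1 := by
    rw [← pow_add]
    exact Even.neg_one_pow ⟨k, rfl⟩
  have h2 : esymm (Fin g) ℂ k ^ 2 = esq g k - (-1) ^ k * S := by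
    linear_combination ((-1 : MvPolynomial (Fin g) ℂ)) ^ k * h +
      (esq g k - esymm (Fin g) ℂ k ^ 2) * e1
  rw [h2, sub_mul]
  refine Ideal.sub_mem _ (Ideal.mul_mem_right _ _ (esq_mem g k hk hkg)) ?_
  rw [mul_assoc]
  refine Ideal.mul_mem_left _ _ ?_
  rw [hS, Finset.sum_mul]
  refine Ideal.sum_mem _ ?_
  rintro ⟨i, j⟩ hp
  have hij : i + j = 2 * k := Finset.HasAntidiagonal.mem_antidiagonal.mp (Finset.mem_of_mem_erase hp)
  have hne : (i, j) ≠ (k, k) := Finset.ne_of_mem_erase hp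
  have : i ≠ k ∨ j ≠ k := by
    by_contra hcon
    push_neg at hcon
    exact hne (by rw [hcon.1, hcon.2])
  rcases Nat.lt_or_ge k i with hi | hi
  · have hre : esymm (Fin g) ℂ i * ((-1) ^ j * esymm (Fin g) ℂ j) *
        ∏ x ∈ Finset.Icc (k + 1) g, esymm (Fin g) ℂ x =
        ((-1) ^ j * esymm (Fin g) ℂ j) * esymm (Fin g) ℂ i *
        ∏ x ∈ Finset.Icc (k + 1) g, esymm (Fin g) ℂ x := by ring
    rw [hre]
    exact term_mem g k i hi IH _
  · have hj : k < j := by omega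
    have hre : esymm (Fin g) ℂ i * ((-1) ^ j * esymm (Fin g) ℂ j) *
        ∏ x ∈ Finset.Icc (k + 1) g, esymm (Fin g) ℂ x =
        ((-1) ^ j * esymm (Fin g) ℂ i) * esymm (Fin g) ℂ j *
        ∏ x ∈ Finset.Icc (k + 1) g, esymm (Fin g) ℂ x := by ring
    rw [hre]
    exact term_mem g k j hj IH _

/-- (Lemma `sympaux`) For `1 ≤ k ≤ g`, the element `e_k² · e_{k+1} ⋯ e_g`
lies in the ideal `I_g`. -/
theorem stmt_0 (g k : ℕ) (hg : 1 ≤ g) (hk : 1 ≤ k) (hkg : k ≤ g) :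
    (esymm (Fin g) ℂ k) ^ 2 * ∏ j ∈ Finset.Icc (k + 1) g, esymm (Fin g) ℂ j ∈ Ig g := by
  suffices h : ∀ n : ℕ, ∀ k, 1 ≤ k → k ≤ g → g - k ≤ n →
      (esymm (Fin g) ℂ k) ^ 2 * ∏ j ∈ Finset.Icc (k + 1) g, esymm (Fin g) ℂ j ∈ Ig g from
    h (g - k) k hk hkg le_rfl
  intro n
  induction n with
  | zero =>
    intro k hk hkg hn
    exact step g k hk hkg (fun m' hm' hm'g => absurd (by omega : g < m') (not_lt.mpr hm'g))
  | succ n IH =>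
    intro k hk hkg hn
    exact step g k hk hkg (fun m' hm' hm'g => IH m' (by omega) hm'g (by omega))
end

section
/- Let g ≥ 1. Then the product e₁ · e₂ ⋯ e_g of all the elementary symmetric polynomials in x₁,…,x_g does NOT belong to the ideal I_g; equivalently, the class σ₁σ₂⋯σ_g is a nonzero element (generating the top-degree cohomology) of the quotient ring. -/
open MvPolynomial

section TopSympAuxSection

open Finset

set_option linter.dupNamespace false

namespace TopSympAux

variable {g : ℕ}

/-- exponent vector equal to `c` on `S`, `0` elsewhere. -/
noncomputable def indF (S : Finset (Fin g)) (c : ℕ) : Fin g →₀ ℕ := ∑ i ∈ S, Finsupp.single i c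

lemma indF_apply (S : Finset (Fin g)) (c : ℕ) (m : Fin g) :
    indF S c m = if m ∈ S then c else 0 := by
  classical
  rw [indF, Finsupp.finset_sum_apply]
  simp [Finsupp.single_apply]

lemma prod_monomial {ι : Type*} (s : Finset ι) (d : ι → (Fin g →₀ ℕ)) :
    (∏ i ∈ s, (monomial (d i) (1 : ℂ))) = monomial (∑ i ∈ s, d i) 1 := by
  classical
  induction s using Finset.induction with
  | empty => simp
  | insert _ _ h ih =>
    rw [Finset.prod_insert h, Finset.sum_insert h, ih, monomial_mul, one_mul]

lemma esymm_expand (k : ℕ) :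
    esymm (Fin g) ℂ k = ∑ S ∈ powersetCard k (univ : Finset (Fin g)), monomial (indF S 1) (1 : ℂ) := by
  rw [esymm]
  refine Finset.sum_congr rfl fun S _ => ?_
  rw [indF, ← prod_monomial]
  refine Finset.prod_congr rfl fun i _ => ?_
  rw [← X_pow_eq_monomial, pow_one]

lemma esq_expand (g k : ℕ) :
    (aeval (fun i : Fin g => (X i : MvPolynomial (Fin g) ℂ) ^ 2) (esymm (Fin g) ℂ k))
      = ∑ S ∈ powersetCard k (univ : Finset (Fin g)), monomial (indF S 2) (1 : ℂ) := by
  rw [esymm, map_sum]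
  refine Finset.sum_congr rfl fun S _ => ?_
  rw [map_prod]
  simp only [aeval_X]
  rw [indF, ← prod_monomial]
  refine Finset.prod_congr rfl fun i _ => ?_
  rw [← X_pow_eq_monomial]

/-- `wexp σ` : the exponent vector `i ↦ 2σ(i)+1`. -/
noncomputable def wexp (σ : Equiv.Perm (Fin g)) : Fin g →₀ ℕ :=
  Finsupp.equivFunOnFinite.symm fun i => 2 * (σ i : ℕ) + 1

lemma wexp_apply (σ : Equiv.Perm (Fin g)) (i : Fin g) :
    wexp σ i = 2 * (σ i : ℕ) + 1 := by
  simp [wexp]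

/-- the staircase exponent `i ↦ g-1-i`. -/
noncomputable def alf (g : ℕ) : Fin g →₀ ℕ :=
  Finsupp.equivFunOnFinite.symm fun i => g - 1 - (i : ℕ)

lemma alf_apply (i : Fin g) : alf g i = g - 1 - (i : ℕ) := by
  simp [alf]

/-- The "pairing against the type-C Vandermonde" functional. -/
noncomputable def Lfun (g : ℕ) (f : MvPolynomial (Fin g) ℂ) : ℂ :=
  ∑ σ : Equiv.Perm (Fin g), ((Equiv.Perm.sign σ : ℤ) : ℂ) * coeff (wexp σ) f

lemma Lfun_zero (g : ℕ) : Lfun g 0 = 0 := by simp [Lfun]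

lemma Lfun_add (g : ℕ) (f₁ f₂ : MvPolynomial (Fin g) ℂ) :
    Lfun g (f₁ + f₂) = Lfun g f₁ + Lfun g f₂ := by
  simp [Lfun, coeff_add, mul_add, Finset.sum_add_distrib]



lemma range_card_sum_le_aux (n : ℕ) : ∀ T : Finset ℕ, T.card = n → ∑ i ∈ Finset.range T.card, i ≤ ∑ t ∈ T, t := by
  induction n with
  | zero => intro T h; simp [h]
  | succ n ih =>
    intro T h
    have hne : T.Nonempty := Finset.card_pos.mp (h ▸ n.succ_pos)
    set m := T.max' hne with hm
    have hmem : m ∈ T := T.max'_mem hne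
    have hsub : T ⊆ Finset.range (m + 1) := fun x hx =>
      Finset.mem_range.mpr (Nat.lt_succ_of_le (T.le_max' x hx))
    have hcard : T.card ≤ m + 1 := by
      simpa using Finset.card_le_card hsub
    have herase : (T.erase m).card = n := by
      rw [Finset.card_erase_of_mem hmem, h]
      rfl
    have h1 := ih (T.erase m) herase
    rw [herase] at h1
    have h2 : ∑ t ∈ T.erase m, t + m = ∑ t ∈ T, t := Finset.sum_erase_add T _ hmem
    rw [h, Finset.sum_range_succ]
    omega

lemma range_card_sum_le (T : Finset ℕ) : ∑ i ∈ Finset.range T.card, i ≤ ∑ t ∈ T, t :=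
  range_card_sum_le_aux T.card T rfl

lemma injsum {n : ℕ} (h : Fin n → ℕ) (hinj : Function.Injective h) :
    ∑ i : Fin n, (i : ℕ) ≤ ∑ i : Fin n, h i := by
  classical
  have h1 : ∑ i : Fin n, h i = ∑ v ∈ Finset.image h univ, v :=
    (Finset.sum_image (g := h) (f := fun v => v) (fun a _ b _ hab => hinj hab)).symm
  have hcard : (Finset.image h univ).card = n := by
    rw [Finset.card_image_of_injective _ hinj, Finset.card_univ, Fintype.card_fin]
  have h2 := range_card_sum_le (Finset.image h univ)
  rw [hcard] at h2
  have h3 : ∑ i : Fin n, (i : ℕ) = ∑ i ∈ Finset.range n, i :=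
    Fin.sum_univ_eq_sum_range (fun i => i) n
  omega


lemma czero (g k : ℕ) (hk1 : 1 ≤ k) (γ : Fin g →₀ ℕ) :
    ∑ σ : Equiv.Perm (Fin g), ∑ S ∈ powersetCard k (univ : Finset (Fin g)),
      (if γ + indF S 2 = wexp σ then ((Equiv.Perm.sign σ : ℤ) : ℂ) else 0) = 0 := by
  classical
  have hpt : ∀ (σ : Equiv.Perm (Fin g)) (S : Finset (Fin g)),
      (γ + indF S 2 = wexp σ) ↔ ∀ m, γ m + (if m ∈ S then 2 else 0) = 2 * (σ m : ℕ) + 1 := by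
    intro σ S
    constructor
    · intro h m
      have := DFunLike.congr_fun h m
      simpa [Finsupp.add_apply, indF_apply, wexp_apply] using this
    · intro h
      ext m
      simp [Finsupp.add_apply, indF_apply, wexp_apply, h m]
  rw [← Finset.sum_product' (s := univ) (t := powersetCard k univ)
    (f := fun σ S => if γ + indF S 2 = wexp σ then ((Equiv.Perm.sign σ : ℤ) : ℂ) else 0)]
  by_cases hinj : ∀ i j : Fin g, γ i = γ j → i = j
  · -- injective case : every term vanishes
    refine Finset.sum_eq_zero fun a ha => ?_
    by_cases hcond : γ + indF a.2 2 = wexp a.1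
    swap
    · simp [hcond]
    exfalso
    have hm := (hpt a.1 a.2).mp hcond
    have hS : a.2.card = k := mem_powersetCard_univ.mp (Finset.mem_product.mp ha).2
    set h : Fin g → ℕ := fun m => (a.1 m : ℕ) - (if m ∈ a.2 then 1 else 0) with hh
    have hγh : ∀ m, γ m = 2 * h m + 1 := by
      intro m
      have := hm m
      by_cases hmS : m ∈ a.2 <;> simp [hh, hmS] at this ⊢ <;> omega
    have hinj2 : Function.Injective h := fun m m' he => hinj m m' (by rw [hγh, hγh, he])
    have h1 := injsum h hinj2
    have h2 : ∑ m : Fin g, (a.1 m : ℕ) = ∑ m : Fin g, (m : ℕ) :=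
      Equiv.sum_comp a.1 (fun i : Fin g => (i : ℕ))
    have h3 : ∑ m : Fin g, (if m ∈ a.2 then (2 : ℕ) else 0) = 2 * k := by
      rw [Finset.sum_ite_mem, Finset.univ_inter, Finset.sum_const, hS, smul_eq_mul, mul_comm]
    have h4 : ∑ m : Fin g, (γ m + if m ∈ a.2 then 2 else 0) = ∑ m : Fin g, (2 * (a.1 m : ℕ) + 1) :=
      Finset.sum_congr rfl fun m _ => hm m
    have hsum_w : ∑ m : Fin g, (2 * (a.1 m : ℕ) + 1) = 2 * (∑ m : Fin g, (m : ℕ)) + g := by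
      rw [Finset.sum_add_distrib, ← Finset.mul_sum, h2]
      simp
    have hsum_l : ∑ m : Fin g, (γ m + if m ∈ a.2 then 2 else 0) = (∑ m : Fin g, γ m) + 2 * k := by
      rw [Finset.sum_add_distrib, h3]
    have h5 : ∑ m : Fin g, γ m = ∑ m : Fin g, (2 * h m + 1) :=
      Finset.sum_congr rfl fun m _ => hγh m
    have h5' : ∑ m : Fin g, γ m = 2 * (∑ m : Fin g, h m) + g := by
      rw [h5, Finset.sum_add_distrib, ← Finset.mul_sum]
      simp
    omega
  · -- non-injective case : sign-reversing involution
    push_neg at hinj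
    obtain ⟨i, j, hγij, hij⟩ := hinj
    have hmemS' : ∀ S : Finset (Fin g),
        (i ∈ symmDiff S {i, j} ↔ i ∉ S) ∧ (j ∈ symmDiff S {i, j} ↔ j ∉ S) ∧
          ∀ m, m ≠ i → m ≠ j → (m ∈ symmDiff S {i, j} ↔ m ∈ S) := by
      intro S
      refine ⟨?_, ?_, fun m hmi hmj => ?_⟩
      · simp only [Finset.mem_symmDiff, Finset.mem_insert, Finset.mem_singleton]
        tauto
      · simp only [Finset.mem_symmDiff, Finset.mem_insert, Finset.mem_singleton]
        tauto
      · simp only [Finset.mem_symmDiff, Finset.mem_insert, Finset.mem_singleton]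
        tauto
    have hxor : ∀ (σ : Equiv.Perm (Fin g)) (S : Finset (Fin g)),
        (γ + indF S 2 = wexp σ) → ¬(i ∈ S ↔ j ∈ S) := by
      intro σ S hc hiff
      have h1 := (hpt σ S).mp hc i
      have h2 := (hpt σ S).mp hc j
      have hval : (σ i : ℕ) = (σ j : ℕ) := by
        by_cases hiS : i ∈ S
        · have hjS : j ∈ S := hiff.mp hiS
          rw [if_pos hiS] at h1; rw [if_pos hjS] at h2; omega
        · have hjS : j ∉ S := fun hjS => hiS (hiff.mpr hjS)
          rw [if_neg hiS] at h1; rw [if_neg hjS] at h2; omega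
      exact hij (σ.injective (Fin.ext hval))
    have htrans : ∀ (σ : Equiv.Perm (Fin g)) (S : Finset (Fin g)), ¬(i ∈ S ↔ j ∈ S) →
        (γ + indF S 2 = wexp σ) → (γ + indF (symmDiff S {i, j}) 2 = wexp (σ * Equiv.swap i j)) := by
      intro σ S hx hc
      rw [hpt] at hc ⊢
      intro m
      by_cases hmi : m = i
      · subst hmi
        have hswap : (σ * Equiv.swap m j) m = σ j := by
          simp [Equiv.Perm.mul_apply, Equiv.swap_apply_left]
        rw [hswap]
        have h2 := hc j
        have hmem : m ∈ symmDiff S {m, j} ↔ m ∉ S := (hmemS' S).1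
        by_cases hmS : m ∈ S
        · have hjS : j ∉ S := fun hjS => hx ⟨fun _ => hjS, fun _ => hmS⟩
          have : m ∉ symmDiff S {m, j} := fun hc2 => (hmem.mp hc2) hmS
          rw [if_neg this, if_neg hjS] at *
          omega
        · have hjS : j ∈ S := by
            by_contra hjS
            exact hx ⟨fun h => absurd h hmS, fun h => absurd h hjS⟩
          have : m ∈ symmDiff S {m, j} := hmem.mpr hmS
          rw [if_pos this, if_pos hjS] at *
          omega
      by_cases hmj : m = j
      · subst hmj
        have hswap : (σ * Equiv.swap i m) m = σ i := by
          simp [Equiv.Perm.mul_apply, Equiv.swap_apply_right]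
        rw [hswap]
        have h2 := hc i
        have hmem : m ∈ symmDiff S {i, m} ↔ m ∉ S := (hmemS' S).2.1
        by_cases hmS : m ∈ S
        · have hiS : i ∉ S := fun hiS => hx ⟨fun _ => hmS, fun _ => hiS⟩
          have : m ∉ symmDiff S {i, m} := fun hc2 => (hmem.mp hc2) hmS
          rw [if_neg this, if_neg hiS] at *
          have : γ i = γ m := hγij
          omega
        · have hiS : i ∈ S := by
            by_contra hiS
            exact hx ⟨fun h => absurd h hiS, fun h => absurd h hmS⟩
          have : m ∈ symmDiff S {i, m} := hmem.mpr hmS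
          rw [if_pos this, if_pos hiS] at *
          have : γ i = γ m := hγij
          omega
      · have hswap : (σ * Equiv.swap i j) m = σ m := by
          simp [Equiv.Perm.mul_apply, Equiv.swap_apply_of_ne_of_ne hmi hmj]
        rw [hswap]
        have hmem := (hmemS' S).2.2 m hmi hmj
        have h2 := hc m
        by_cases hmS : m ∈ S
        · rw [if_pos (hmem.mpr hmS), if_pos hmS] at *; omega
        · rw [if_neg (fun hc2 => hmS (hmem.mp hc2)), if_neg hmS] at *; omega
    have hxor2 : ∀ S : Finset (Fin g), ¬(i ∈ S ↔ j ∈ S) →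
        ¬(i ∈ symmDiff S {i, j} ↔ j ∈ symmDiff S {i, j}) := by
      intro S hx hiff
      have h1 := (hmemS' S).1
      have h2 := (hmemS' S).2.1
      tauto
    have hcard' : ∀ S : Finset (Fin g), ¬(i ∈ S ↔ j ∈ S) → S ∈ powersetCard k (univ : Finset (Fin g)) →
        symmDiff S {i, j} ∈ powersetCard k (univ : Finset (Fin g)) := by
      intro S hx hS
      rw [mem_powersetCard_univ] at hS ⊢
      have hgen : ∀ (a b : Fin g) (Q : Finset (Fin g)), a ≠ b → a ∈ Q → b ∉ Q →
          symmDiff Q ({a, b} : Finset (Fin g)) = insert b (Q.erase a) := by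
        intro a b Q hab haQ hbQ
        ext m
        simp only [Finset.mem_symmDiff, Finset.mem_insert, Finset.mem_singleton, Finset.mem_erase]
        constructor
        · rintro (⟨hmQ, hm⟩ | ⟨hm | hm, hmQ⟩)
          · right; exact ⟨fun h => hm (Or.inl h), hmQ⟩
          · subst hm; exact absurd haQ hmQ
          · subst hm; left; rfl
        · rintro (rfl | ⟨hma, hmQ⟩)
          · exact Or.inr ⟨Or.inr rfl, hbQ⟩
          · left; exact ⟨hmQ, fun h => by rcases h with h | h; exact hma h; subst h; exact hbQ hmQ⟩
      by_cases hiS : i ∈ S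
      · have hjS : j ∉ S := fun hjS => hx ⟨fun _ => hjS, fun _ => hiS⟩
        rw [hgen i j S hij hiS hjS, Finset.card_insert_of_notMem (fun hc => hjS (Finset.mem_of_mem_erase hc)),
          Finset.card_erase_of_mem hiS]
        have : 1 ≤ S.card := Finset.card_pos.mpr ⟨i, hiS⟩
        omega
      · have hjS : j ∈ S := by
          by_contra hjS
          exact hx ⟨fun h => absurd h hiS, fun h => absurd h hjS⟩
        have hpc : ({i, j} : Finset (Fin g)) = {j, i} := Finset.pair_comm i j
        rw [hpc, hgen j i S (Ne.symm hij) hjS hiS,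
          Finset.card_insert_of_notMem (fun hc => hiS (Finset.mem_of_mem_erase hc)),
          Finset.card_erase_of_mem hjS]
        have : 1 ≤ S.card := Finset.card_pos.mpr ⟨j, hjS⟩
        omega
    refine Finset.sum_involution
      (fun a _ => if (i ∈ a.2 ↔ j ∈ a.2) then a else (a.1 * Equiv.swap i j, symmDiff a.2 {i, j}))
      ?_ ?_ ?_ ?_
    · intro a ha
      by_cases hx : (i ∈ a.2 ↔ j ∈ a.2)
      · rw [if_pos hx, if_neg (fun hc => hxor a.1 a.2 hc hx)]
        norm_num
      · rw [if_neg hx]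
        by_cases hc : γ + indF a.2 2 = wexp a.1
        · rw [if_pos hc, if_pos (htrans a.1 a.2 hx hc)]
          have hs : ((Equiv.Perm.sign (a.1 * Equiv.swap i j) : ℤ) : ℂ)
              = -((Equiv.Perm.sign a.1 : ℤ) : ℂ) := by
            rw [Equiv.Perm.sign_mul, Equiv.Perm.sign_swap hij]
            push_cast
            ring
          rw [hs]
          ring
        · rw [if_neg hc, if_neg ?_]
          · norm_num
          intro hc2
          have := htrans _ _ (hxor2 a.2 hx) hc2
          rw [symmDiff_symmDiff_cancel_right, mul_assoc, Equiv.swap_mul_self, mul_one] at this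
          exact hc this
    · intro a ha hf
      have hc : γ + indF a.2 2 = wexp a.1 := by
        by_contra hc
        rw [if_neg hc] at hf
        exact hf rfl
      have hx := hxor _ _ hc
      rw [if_neg hx]
      intro he
      have h2 : symmDiff a.2 {i, j} = a.2 := congrArg Prod.snd he
      have hi' := (hmemS' a.2).1
      rw [h2] at hi'
      tauto
    · intro a ha
      by_cases hx : (i ∈ a.2 ↔ j ∈ a.2)
      · rw [if_pos hx]; exact ha
      · rw [if_neg hx]
        rw [Finset.mem_product] at ha ⊢
        exact ⟨Finset.mem_univ _, hcard' a.2 hx ha.2⟩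
    · intro a ha
      by_cases hx : (i ∈ a.2 ↔ j ∈ a.2)
      · simp only [if_pos hx]
      · rw [if_neg hx]
        have hx2 := hxor2 a.2 hx
        dsimp only
        rw [if_neg hx2, mul_assoc, Equiv.swap_mul_self, mul_one, symmDiff_symmDiff_cancel_right]

lemma Lfun_r_esq (g k : ℕ) (hk1 : 1 ≤ k) (r : MvPolynomial (Fin g) ℂ) :
    Lfun g (r * aeval (fun i : Fin g => (X i : MvPolynomial (Fin g) ℂ) ^ 2) (esymm (Fin g) ℂ k)) = 0 := by
  classical
  have expand : ∀ w : Fin g →₀ ℕ,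
      coeff w (r * aeval (fun i : Fin g => (X i : MvPolynomial (Fin g) ℂ) ^ 2) (esymm (Fin g) ℂ k))
        = ∑ S ∈ powersetCard k (univ : Finset (Fin g)), ∑ γ ∈ r.support,
            (if γ + indF S 2 = w then coeff γ r else 0) := by
    intro w
    rw [esq_expand, Finset.mul_sum, coeff_sum]
    refine Finset.sum_congr rfl fun S _ => ?_
    rw [coeff_mul_monomial']
    split_ifs with hle
    · rw [mul_one]
      have hcong : ∀ γ ∈ r.support,
          (if γ + indF S 2 = w then coeff γ r else 0) = (if γ = w - indF S 2 then coeff γ r else 0) :=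
        fun γ _ => if_congr ((eq_tsub_iff_add_eq_of_le hle).symm) rfl rfl
      rw [Finset.sum_congr rfl hcong, Finset.sum_ite_eq' r.support (w - indF S 2) (fun γ => coeff γ r)]
      split_ifs with hs
      · rfl
      · exact notMem_support_iff.mp hs
    · refine (Finset.sum_eq_zero fun γ _ => ?_).symm
      rw [if_neg]
      intro hEq
      exact hle (hEq ▸ le_add_self)
  rw [Lfun]
  calc ∑ σ : Equiv.Perm (Fin g), ((Equiv.Perm.sign σ : ℤ) : ℂ)
        * coeff (wexp σ) (r * aeval (fun i : Fin g => (X i : MvPolynomial (Fin g) ℂ) ^ 2) (esymm (Fin g) ℂ k))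
      = ∑ σ : Equiv.Perm (Fin g), ∑ S ∈ powersetCard k (univ : Finset (Fin g)), ∑ γ ∈ r.support,
          ((if γ + indF S 2 = wexp σ then ((Equiv.Perm.sign σ : ℤ) : ℂ) else 0) * coeff γ r) := by
        refine Finset.sum_congr rfl fun σ _ => ?_
        rw [expand (wexp σ), Finset.mul_sum]
        refine Finset.sum_congr rfl fun S _ => ?_
        rw [Finset.mul_sum]
        refine Finset.sum_congr rfl fun γ _ => ?_
        split_ifs with h
        · ring
        · ring
    _ = ∑ σ : Equiv.Perm (Fin g), ∑ γ ∈ r.support, ∑ S ∈ powersetCard k (univ : Finset (Fin g)),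
          ((if γ + indF S 2 = wexp σ then ((Equiv.Perm.sign σ : ℤ) : ℂ) else 0) * coeff γ r) :=
        Finset.sum_congr rfl fun σ _ => Finset.sum_comm
    _ = ∑ γ ∈ r.support, ∑ σ : Equiv.Perm (Fin g), ∑ S ∈ powersetCard k (univ : Finset (Fin g)),
          ((if γ + indF S 2 = wexp σ then ((Equiv.Perm.sign σ : ℤ) : ℂ) else 0) * coeff γ r) :=
        Finset.sum_comm
    _ = 0 := by
        refine Finset.sum_eq_zero fun γ _ => ?_
        have h1 : ∀ σ : Equiv.Perm (Fin g), ∑ S ∈ powersetCard k (univ : Finset (Fin g)),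
            ((if γ + indF S 2 = wexp σ then ((Equiv.Perm.sign σ : ℤ) : ℂ) else 0) * coeff γ r)
            = (∑ S ∈ powersetCard k (univ : Finset (Fin g)),
                (if γ + indF S 2 = wexp σ then ((Equiv.Perm.sign σ : ℤ) : ℂ) else 0)) * coeff γ r := by
          intro σ
          rw [Finset.sum_mul]
        rw [Finset.sum_congr rfl fun σ _ => h1 σ, ← Finset.sum_mul, czero g k hk1 γ, zero_mul]

lemma Lfun_vanish (g : ℕ) {f : MvPolynomial (Fin g) ℂ}
    (hf : f ∈ Ideal.span {p : MvPolynomial (Fin g) ℂ | ∃ k : ℕ, 1 ≤ k ∧ k ≤ g ∧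
      p = aeval (fun i : Fin g => (X i : MvPolynomial (Fin g) ℂ) ^ 2) (esymm (Fin g) ℂ k)}) :
    Lfun g f = 0 := by
  have key : ∀ r : MvPolynomial (Fin g) ℂ, Lfun g (r * f) = 0 := by
    refine Submodule.span_induction (p := fun x _ => ∀ r : MvPolynomial (Fin g) ℂ, Lfun g (r * x) = 0)
      ?_ ?_ ?_ ?_ hf
    · rintro x ⟨k, hk1, _, rfl⟩ r
      exact Lfun_r_esq g k hk1 r
    · intro r
      rw [mul_zero, Lfun_zero]
    · intro x y hx hy px py r
      rw [mul_add, Lfun_add, px r, py r, add_zero]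
    · intro a x hx px r
      rw [smul_eq_mul, ← mul_assoc]
      exact px (r * a)
  have := key 1
  rwa [one_mul] at this

lemma cardlt (g j : ℕ) (hj : j ≤ g) :
    ((univ : Finset (Fin g)).filter fun i : Fin g => (i : ℕ) < j).card = j := by
  classical
  have hmap : ((univ : Finset (Fin j)).map (Fin.castLEEmb hj)) =
      ((univ : Finset (Fin g)).filter fun i : Fin g => (i : ℕ) < j) := by
    ext a
    rw [Finset.mem_map, Finset.mem_filter]
    constructor
    · rintro ⟨b, hb, rfl⟩
      exact ⟨Finset.mem_univ _, by simpa using b.isLt⟩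
    · rintro ⟨-, ha⟩
      exact ⟨⟨(a : ℕ), ha⟩, Finset.mem_univ _, by ext; simp⟩
  rw [← hmap, Finset.card_map, Finset.card_univ, Fintype.card_fin]

lemma key_comb (g : ℕ) (σ : Equiv.Perm (Fin g)) (T : ℕ → Finset (Fin g))
    (hT : ∀ j ∈ Finset.Icc 1 g, (T j).card = j)
    (hc : ∀ i : Fin g,
      (g - 1 - (i : ℕ)) + (∑ j ∈ Finset.Icc 1 g, if i ∈ T j then 1 else 0) = 2 * (σ i : ℕ) + 1) :
    (∀ i, σ i = Fin.rev i) ∧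
      ∀ j ∈ Finset.Icc 1 g, T j = (univ : Finset (Fin g)).filter fun i : Fin g => (i : ℕ) < j := by
  classical
  set β : Fin g → ℕ := fun i => ∑ j ∈ Finset.Icc 1 g, if i ∈ T j then 1 else 0 with hβ
  -- Step 1 : quadratic inequality  ∑ β i ^ 2 ≤ ∑_{t=1}^{g} (g+1-t)^2
  have hsq : (∑ i : Fin g, β i * β i) ≤ ∑ t ∈ Finset.Icc 1 g, (g + 1 - t) * (g + 1 - t) := by
    have e2 : ∑ i : Fin g, β i * β i
        = ∑ j ∈ Finset.Icc 1 g, ∑ j' ∈ Finset.Icc 1 g, (T j ∩ T j').card := by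
      have e1 : ∀ i : Fin g, β i * β i = ∑ j ∈ Finset.Icc 1 g, ∑ j' ∈ Finset.Icc 1 g,
          ((if i ∈ T j then 1 else 0) * (if i ∈ T j' then 1 else 0)) := fun i => by
        simp only [hβ]
        rw [Finset.sum_mul_sum]
      rw [Finset.sum_congr rfl fun i _ => e1 i, Finset.sum_comm]
      refine Finset.sum_congr rfl fun j _ => ?_
      rw [Finset.sum_comm]
      refine Finset.sum_congr rfl fun j' _ => ?_
      have hterm : ∀ i : Fin g, ((if i ∈ T j then 1 else 0) * (if i ∈ T j' then 1 else 0) : ℕ)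
          = if i ∈ T j ∩ T j' then 1 else 0 := by
        intro i
        by_cases h1 : i ∈ T j <;> by_cases h2 : i ∈ T j' <;>
          simp [h1, h2, Finset.mem_inter]
      rw [Finset.sum_congr rfl fun i _ => hterm i, Finset.sum_ite_mem, Finset.univ_inter,
        Finset.sum_const, smul_eq_mul, mul_one]
    rw [e2]
    have hstep : ∀ j ∈ Finset.Icc 1 g, ∀ j' ∈ Finset.Icc 1 g,
        (T j ∩ T j').card ≤ min j j' := by
      intro j hj j' hj'
      refine le_min ?_ ?_
      · calc (T j ∩ T j').card ≤ (T j).card := Finset.card_le_card Finset.inter_subset_left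
          _ = j := hT j hj
      · calc (T j ∩ T j').card ≤ (T j').card := Finset.card_le_card Finset.inter_subset_right
          _ = j' := hT j' hj'
    calc ∑ j ∈ Finset.Icc 1 g, ∑ j' ∈ Finset.Icc 1 g, (T j ∩ T j').card
        ≤ ∑ j ∈ Finset.Icc 1 g, ∑ j' ∈ Finset.Icc 1 g, min j j' :=
          Finset.sum_le_sum fun j hj => Finset.sum_le_sum fun j' hj' => hstep j hj j' hj'
      _ = ∑ t ∈ Finset.Icc 1 g, (g + 1 - t) * (g + 1 - t) := by
          have hmin : ∀ j ∈ Finset.Icc 1 g, ∀ j' ∈ Finset.Icc 1 g,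
              min j j' = ∑ t ∈ Finset.Icc 1 g, ((if t ≤ j then 1 else 0) * (if t ≤ j' then 1 else 0)) := by
            intro j hj j' hj'
            rw [Finset.mem_Icc] at hj hj'
            have : ∀ t ∈ Finset.Icc 1 g, ((if t ≤ j then 1 else 0) * (if t ≤ j' then 1 else 0) : ℕ)
                = if t ≤ min j j' then 1 else 0 := by
              intro t ht
              by_cases h1 : t ≤ j <;> by_cases h2 : t ≤ j' <;> simp [h1, h2] <;> omega
            rw [Finset.sum_congr rfl this, Finset.sum_boole, Nat.cast_id]
            have hfe : (Finset.Icc 1 g).filter (fun t => t ≤ min j j') = Finset.Icc 1 (min j j') := by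
              ext t
              simp only [Finset.mem_filter, Finset.mem_Icc]
              omega
            rw [hfe, Nat.card_Icc]
            omega
          rw [Finset.sum_congr rfl fun j hj => Finset.sum_congr rfl fun j' hj' => hmin j hj j' hj']
          have hswap : ∑ j ∈ Finset.Icc 1 g, ∑ j' ∈ Finset.Icc 1 g, ∑ t ∈ Finset.Icc 1 g,
              ((if t ≤ j then 1 else 0) * (if t ≤ j' then 1 else 0) : ℕ)
              = ∑ t ∈ Finset.Icc 1 g, (∑ j ∈ Finset.Icc 1 g, (if t ≤ j then (1:ℕ) else 0))
                  * (∑ j' ∈ Finset.Icc 1 g, (if t ≤ j' then (1:ℕ) else 0)) := by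
            rw [Finset.sum_congr rfl fun j _ => Finset.sum_comm, Finset.sum_comm]
            refine Finset.sum_congr rfl fun t _ => ?_
            rw [Finset.sum_mul_sum]
          rw [hswap]
          refine Finset.sum_congr rfl fun t ht => ?_
          have hcnt : (∑ j ∈ Finset.Icc 1 g, (if t ≤ j then (1:ℕ) else 0)) = g + 1 - t := by
            rw [Finset.sum_boole, Nat.cast_id]
            have hfe : (Finset.Icc 1 g).filter (fun j => t ≤ j) = Finset.Icc t g := by
              ext j
              simp only [Finset.mem_filter, Finset.mem_Icc]
              rw [Finset.mem_Icc] at ht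
              omega
            rw [hfe, Nat.card_Icc]
          rw [hcnt]
  -- Step 2 : rearrangement forces σ = rev
  set ρ : Equiv.Perm (Fin g) := σ.trans Fin.revPerm with hρ
  have hρv : ∀ i, (ρ i : ℕ) + 1 + (σ i : ℕ) = g := by
    intro i
    have h1 : (ρ i : ℕ) = g - ((σ i : ℕ) + 1) := by
      simp [hρ, Fin.val_rev]
    have := (σ i).isLt
    omega
  set D : Fin g → ℤ := fun i => ((i : ℕ) : ℤ) - ((ρ i : ℕ) : ℤ) with hD
  have hβZ : ∀ i : Fin g, (β i : ℤ) = ((g : ℤ) - ((i : ℕ) : ℤ)) + 2 * D i := by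
    intro i
    have h1 : (g - 1 - (i : ℕ)) + β i = 2 * (σ i : ℕ) + 1 := hc i
    have h2 := hρv i
    have h3 := i.isLt
    simp only [hD]
    omega
  have hsum1 : ∑ i : Fin g, ((ρ i : ℕ) : ℤ) = ∑ i : Fin g, ((i : ℕ) : ℤ) :=
    Equiv.sum_comp ρ (fun i : Fin g => ((i : ℕ) : ℤ))
  have hsum2 : ∑ i : Fin g, ((ρ i : ℕ) : ℤ) * ((ρ i : ℕ) : ℤ)
      = ∑ i : Fin g, ((i : ℕ) : ℤ) * ((i : ℕ) : ℤ) :=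
    Equiv.sum_comp ρ (fun i : Fin g => ((i : ℕ) : ℤ) * ((i : ℕ) : ℤ))
  have hD0 : ∑ i : Fin g, D i = 0 := by
    simp only [hD]
    rw [Finset.sum_sub_distrib, hsum1, sub_self]
  have hiD : ∑ i : Fin g, D i * D i = 2 * ∑ i : Fin g, ((i : ℕ) : ℤ) * D i := by
    have e1 : ∀ i : Fin g, D i * D i
        = ((i : ℕ) : ℤ) * ((i : ℕ) : ℤ) - 2 * (((i : ℕ) : ℤ) * ((ρ i : ℕ) : ℤ))
          + ((ρ i : ℕ) : ℤ) * ((ρ i : ℕ) : ℤ) := by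
      intro i
      simp only [hD]
      ring
    have e2 : ∀ i : Fin g, ((i : ℕ) : ℤ) * D i
        = ((i : ℕ) : ℤ) * ((i : ℕ) : ℤ) - ((i : ℕ) : ℤ) * ((ρ i : ℕ) : ℤ) := by
      intro i
      simp only [hD]
      ring
    rw [Finset.sum_congr rfl fun i _ => e1 i, Finset.sum_congr rfl fun i _ => e2 i]
    rw [Finset.sum_add_distrib, Finset.sum_sub_distrib, Finset.sum_sub_distrib, hsum2,
      ← Finset.mul_sum]
    ring
  have hre : ∑ t ∈ Finset.Icc 1 g, (((g + 1 - t) * (g + 1 - t) : ℕ) : ℤ)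
      = ∑ i : Fin g, ((g : ℤ) - ((i : ℕ) : ℤ)) * ((g : ℤ) - ((i : ℕ) : ℤ)) := by
    rw [Fin.sum_univ_eq_sum_range (fun x => ((g : ℤ) - (x : ℤ)) * ((g : ℤ) - (x : ℤ))) g]
    rw [← Finset.Ico_add_one_right_eq_Icc, Finset.sum_Ico_eq_sum_range]
    refine Finset.sum_congr (by simp) fun x hx => ?_
    rw [Finset.mem_range] at hx
    have h1 : g + 1 - (1 + x) = g - x := by omega
    rw [h1]
    have hxg : x ≤ g := by omega
    push_cast [Nat.cast_sub hxg]
    ring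
  have hA : ∑ i : Fin g, ((i : ℕ) : ℤ) * D i ≤ 0 := by
    have hcast : ∑ i : Fin g, (β i : ℤ) * (β i : ℤ)
        ≤ ∑ t ∈ Finset.Icc 1 g, (((g + 1 - t) * (g + 1 - t) : ℕ) : ℤ) := by
      exact_mod_cast hsq
    have e4 : ∀ i : Fin g, (β i : ℤ) * (β i : ℤ)
        = ((g : ℤ) - ((i : ℕ) : ℤ)) * ((g : ℤ) - ((i : ℕ) : ℤ))
          + 4 * ((g : ℤ) - ((i : ℕ) : ℤ)) * D i + 4 * (D i * D i) := by
      intro i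
      rw [hβZ i]
      ring
    rw [Finset.sum_congr rfl fun i _ => e4 i] at hcast
    rw [Finset.sum_add_distrib, Finset.sum_add_distrib] at hcast
    rw [hre] at hcast
    have e5 : ∑ i : Fin g, 4 * ((g : ℤ) - ((i : ℕ) : ℤ)) * D i
        = 4 * (g : ℤ) * (∑ i : Fin g, D i) - 4 * ∑ i : Fin g, ((i : ℕ) : ℤ) * D i := by
      calc ∑ i : Fin g, 4 * ((g : ℤ) - ((i : ℕ) : ℤ)) * D i
          = ∑ i : Fin g, (4 * (g : ℤ) * D i - 4 * (((i : ℕ) : ℤ) * D i)) :=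
            Finset.sum_congr rfl fun i _ => by ring
        _ = (∑ i : Fin g, 4 * (g : ℤ) * D i) - ∑ i : Fin g, 4 * (((i : ℕ) : ℤ) * D i) :=
            Finset.sum_sub_distrib _ _
        _ = 4 * (g : ℤ) * (∑ i : Fin g, D i) - 4 * ∑ i : Fin g, ((i : ℕ) : ℤ) * D i := by
            rw [← Finset.mul_sum, ← Finset.mul_sum]
    rw [e5, hD0] at hcast
    have e6 : ∑ i : Fin g, 4 * (D i * D i) = 4 * ∑ i : Fin g, D i * D i := by
      rw [← Finset.mul_sum]
    rw [e6, hiD] at hcast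
    linarith
  have hDz : ∀ i : Fin g, D i = 0 := by
    have h2 : ∑ i : Fin g, D i * D i ≤ 0 := by
      rw [hiD]
      linarith
    have h3 : ∀ i ∈ (univ : Finset (Fin g)), (0:ℤ) ≤ D i * D i := fun i _ => mul_self_nonneg _
    have h4 := (Finset.sum_eq_zero_iff_of_nonneg h3).mp (le_antisymm h2 (Finset.sum_nonneg h3))
    intro i
    exact mul_self_eq_zero.mp (h4 i (Finset.mem_univ i))
  have hσrev : ∀ i, σ i = Fin.rev i := by
    intro i
    have h1 := hDz i
    simp only [hD] at h1
    have h2 : (ρ i : ℕ) = (i : ℕ) := by omega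
    have h3 : ρ i = i := Fin.ext h2
    have h4 : Fin.rev (σ i) = i := by
      simpa [hρ, Fin.revPerm] using h3
    have := congrArg Fin.rev h4
    rwa [Fin.rev_rev] at this
  -- Step 3 : determination of the sets T j
  have hβval : ∀ i : Fin g, β i = g - (i : ℕ) := by
    intro i
    have h1 : (g - 1 - (i : ℕ)) + β i = 2 * (σ i : ℕ) + 1 := hc i
    rw [hσrev i, Fin.val_rev] at h1
    have := i.isLt
    omega
  have main : ∀ n : ℕ, ∀ i : Fin g, (i : ℕ) = n → ∀ j ∈ Finset.Icc 1 g, (i ∈ T j ↔ (i : ℕ) < j) := by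
    intro n
    induction n using Nat.strong_induction_on with
    | _ n ih =>
      intro i hi j hj
      have hTlow : ∀ j' ∈ Finset.Icc 1 g, j' ≤ n →
          T j' = (univ : Finset (Fin g)).filter fun i' : Fin g => (i' : ℕ) < j' := by
        intro j' hj' hle
        have hsub : ((univ : Finset (Fin g)).filter fun i' : Fin g => (i' : ℕ) < j') ⊆ T j' := by
          intro i' hi'
          have hi'lt : (i' : ℕ) < j' := (Finset.mem_filter.mp hi').2
          have hlt : (i' : ℕ) < n := lt_of_lt_of_le hi'lt hle
          exact (ih (i' : ℕ) hlt i' rfl j' hj').mpr hi'lt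
        have hcard : (T j').card ≤ ((univ : Finset (Fin g)).filter fun i' : Fin g => (i' : ℕ) < j').card := by
          rw [hT j' hj', cardlt g j' (Finset.mem_Icc.mp hj').2]
        exact (Finset.eq_of_subset_of_card_le hsub hcard).symm
      have hnle : n ≤ g := by
        have := i.isLt
        omega
      have hsplit : (∑ j' ∈ Finset.Icc 1 n, if i ∈ T j' then 1 else 0)
          + (∑ j' ∈ Finset.Icc (n+1) g, if i ∈ T j' then 1 else 0) = β i := by
        have h0 : Finset.Icc 1 n = Finset.Ioc 0 n := Finset.Icc_add_one_left_eq_Ioc 0 n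
        have h1 : Finset.Icc (n+1) g = Finset.Ioc n g := Finset.Icc_add_one_left_eq_Ioc n g
        have h2 : Finset.Icc 1 g = Finset.Ioc 0 g := Finset.Icc_add_one_left_eq_Ioc 0 g
        rw [h0, h1]
        have h3 := Finset.sum_Ioc_consecutive (fun j' => if i ∈ T j' then (1:ℕ) else 0)
          (Nat.zero_le n) hnle
        rw [h3, hβ, ← h2]
      have hlow0 : (∑ j' ∈ Finset.Icc 1 n, if i ∈ T j' then 1 else 0) = 0 := by
        refine Finset.sum_eq_zero fun j' hj' => ?_
        have hj'm := Finset.mem_Icc.mp hj'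
        have hj'g : j' ∈ Finset.Icc 1 g := Finset.mem_Icc.mpr ⟨hj'm.1, le_trans hj'm.2 hnle⟩
        rw [hTlow j' hj'g hj'm.2, if_neg]
        rw [Finset.mem_filter]
        rintro ⟨-, hlt⟩
        omega
      have hupp : ∀ j' ∈ Finset.Icc (n+1) g, i ∈ T j' := by
        have hs : (∑ j' ∈ Finset.Icc (n+1) g, if i ∈ T j' then (1:ℕ) else 0) = g - n := by
          have := hβval i
          omega
        have hfc : ((Finset.Icc (n+1) g).filter fun j' => i ∈ T j').card = g - n := by
          rw [← hs, Finset.sum_boole, Nat.cast_id]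
        have hfeq : (Finset.Icc (n+1) g).filter (fun j' => i ∈ T j') = Finset.Icc (n+1) g := by
          refine Finset.eq_of_subset_of_card_le (Finset.filter_subset _ _) ?_
          rw [hfc, Nat.card_Icc]
          omega
        intro j' hj'
        have : j' ∈ (Finset.Icc (n+1) g).filter (fun j' => i ∈ T j') := hfeq.symm ▸ hj'
        exact (Finset.mem_filter.mp this).2
      constructor
      · intro hmem
        by_contra hlt
        have hjm := Finset.mem_Icc.mp hj
        have hjn : j ≤ n := by omega
        rw [hTlow j hj hjn, Finset.mem_filter] at hmem
        omega
      · intro hlt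
        exact hupp j (Finset.mem_Icc.mpr ⟨by omega, (Finset.mem_Icc.mp hj).2⟩)
  refine ⟨hσrev, fun j hj => ?_⟩
  ext i
  rw [Finset.mem_filter]
  constructor
  · intro hmem
    exact ⟨Finset.mem_univ _, (main (i : ℕ) i rfl j hj).mp hmem⟩
  · rintro ⟨-, hlt⟩
    exact (main (i : ℕ) i rfl j hj).mpr hlt

lemma Lfun_top (g : ℕ) :
    Lfun g ((monomial (alf g)) (1:ℂ) * ∏ j ∈ Finset.Icc 1 g, esymm (Fin g) ℂ j)
      = ((Equiv.Perm.sign (Fin.revPerm : Equiv.Perm (Fin g)) : ℤ) : ℂ) := by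
  classical
  set pis := (Finset.Icc 1 g).pi (fun j => powersetCard j (univ : Finset (Fin g))) with hpis
  set E : ((j : ℕ) → j ∈ Finset.Icc 1 g → Finset (Fin g)) → (Fin g →₀ ℕ) :=
    fun p => ∑ x ∈ (Finset.Icc 1 g).attach, indF (p x.1 x.2) 1 with hE
  have hP : (∏ j ∈ Finset.Icc 1 g, esymm (Fin g) ℂ j)
      = ∑ p ∈ pis, monomial (E p) (1:ℂ) := by
    rw [Finset.prod_congr rfl (fun j _ => esymm_expand (g := g) j), Finset.prod_sum]
    exact Finset.sum_congr rfl fun p hp => prod_monomial _ _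
  rw [hP, Finset.mul_sum]
  have hmono : ∀ p ∈ pis,
      (monomial (alf g)) (1:ℂ) * monomial (E p) 1 = monomial (alf g + E p) 1 :=
    fun p _ => by rw [monomial_mul, one_mul]
  rw [Finset.sum_congr rfl hmono, Lfun]
  have hco : ∀ σ : Equiv.Perm (Fin g),
      coeff (wexp σ) (∑ p ∈ pis, monomial (alf g + E p) (1:ℂ))
        = ∑ p ∈ pis, if alf g + E p = wexp σ then (1:ℂ) else 0 := by
    intro σ
    rw [coeff_sum]
    exact Finset.sum_congr rfl fun p _ => coeff_monomial _ _ _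
  rw [Finset.sum_congr rfl fun σ _ => by rw [hco σ]]
  set p0 : (j : ℕ) → j ∈ Finset.Icc 1 g → Finset (Fin g) :=
    fun j _ => (univ : Finset (Fin g)).filter fun i : Fin g => (i : ℕ) < j with hp0
  have hp0mem : p0 ∈ pis := by
    rw [hpis, Finset.mem_pi]
    intro j hj
    rw [mem_powersetCard_univ, hp0]
    exact cardlt g j (Finset.mem_Icc.mp hj).2
  -- pointwise computation of E p
  have hEpt : ∀ (p : (j : ℕ) → j ∈ Finset.Icc 1 g → Finset (Fin g)) (i : Fin g),
      (alf g + E p) i = (g - 1 - (i : ℕ))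
        + ∑ j ∈ Finset.Icc 1 g, (if i ∈ (if h : j ∈ Finset.Icc 1 g then p j h else ∅) then 1 else 0) := by
    intro p i
    rw [Finsupp.add_apply, alf_apply, hE]
    congr 1
    rw [Finsupp.finset_sum_apply]
    have h1 : ∀ x : {x // x ∈ Finset.Icc 1 g}, (indF (p x.1 x.2) 1) i
        = (if i ∈ (if h : x.1 ∈ Finset.Icc 1 g then p x.1 h else ∅) then 1 else 0) := by
      intro x
      rw [indF_apply, dif_pos x.2]
    rw [Finset.sum_congr rfl fun x _ => h1 x]
    exact Finset.sum_attach (Finset.Icc 1 g)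
      (fun j => if i ∈ (if h : j ∈ Finset.Icc 1 g then p j h else ∅) then (1:ℕ) else 0)
  have hrevval : ∀ i : Fin g, (Fin.revPerm i : ℕ) = g - 1 - (i : ℕ) := by
    intro i
    have h1 : (Fin.rev i : ℕ) = g - ((i : ℕ) + 1) := Fin.val_rev i
    have := i.isLt
    simp only [Fin.revPerm_apply]
    omega
  have hcond0 : alf g + E p0 = wexp Fin.revPerm := by
    ext i
    rw [hEpt p0 i, wexp_apply, hrevval i]
    have hcnt : ∑ j ∈ Finset.Icc 1 g,
        (if i ∈ (if h : j ∈ Finset.Icc 1 g then p0 j h else ∅) then (1:ℕ) else 0)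
        = g - (i : ℕ) := by
      have h1 : ∀ j ∈ Finset.Icc 1 g,
          (if i ∈ (if h : j ∈ Finset.Icc 1 g then p0 j h else ∅) then (1:ℕ) else 0)
          = if (i : ℕ) < j then 1 else 0 := by
        intro j hj
        rw [dif_pos hj]
        by_cases hlt : (i : ℕ) < j
        · simp [hp0, hlt]
        · simp [hp0, hlt]
      rw [Finset.sum_congr rfl h1, Finset.sum_boole, Nat.cast_id]
      have hfe : (Finset.Icc 1 g).filter (fun j => (i : ℕ) < j) = Finset.Icc ((i : ℕ) + 1) g := by
        ext j
        simp only [Finset.mem_filter, Finset.mem_Icc]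
        omega
      rw [hfe, Nat.card_Icc]
      omega
    rw [hcnt]
    have := i.isLt
    omega
  have hchar : ∀ (σ : Equiv.Perm (Fin g)) (p), p ∈ pis →
      (alf g + E p = wexp σ) → (σ = Fin.revPerm ∧ p = p0) := by
    intro σ p hp hcond
    set T : ℕ → Finset (Fin g) := fun j => if h : j ∈ Finset.Icc 1 g then p j h else ∅ with hTdef
    have hT : ∀ j ∈ Finset.Icc 1 g, (T j).card = j := by
      intro j hj
      rw [hTdef]
      simp only [dif_pos hj]
      exact mem_powersetCard_univ.mp (Finset.mem_pi.mp (hpis ▸ hp) j hj)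
    have hc : ∀ i : Fin g,
        (g - 1 - (i : ℕ)) + (∑ j ∈ Finset.Icc 1 g, if i ∈ T j then 1 else 0) = 2 * (σ i : ℕ) + 1 := by
      intro i
      have h1 := DFunLike.congr_fun hcond i
      rw [hEpt p i, wexp_apply] at h1
      exact h1
    obtain ⟨hσ, hTj⟩ := key_comb g σ T hT hc
    constructor
    · refine Equiv.ext fun i => ?_
      rw [hσ i, Fin.revPerm_apply]
    · funext j hj
      have h2 : T j = p j hj := by rw [hTdef]; simp only [dif_pos hj]
      rw [← h2, hTj j hj, hp0]
  rw [Finset.sum_eq_single Fin.revPerm]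
  · have hinner : (∑ p ∈ pis, if alf g + E p = wexp (Fin.revPerm : Equiv.Perm (Fin g)) then (1:ℂ) else 0) = 1 := by
      rw [Finset.sum_eq_single p0]
      · rw [if_pos hcond0]
      · intro p hp hne
        rw [if_neg]
        intro hcond
        exact hne (hchar _ p hp hcond).2
      · intro h
        exact absurd hp0mem h
    rw [hinner, mul_one]
  · intro σ _ hne
    have hz : (∑ p ∈ pis, if alf g + E p = wexp σ then (1:ℂ) else 0) = 0 := by
      refine Finset.sum_eq_zero fun p hp => ?_
      rw [if_neg]
      intro hcond
      exact hne (hchar σ p hp hcond).1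
    rw [hz, mul_zero]
  · intro h
    exact absurd (Finset.mem_univ _) h

end TopSympAux



/-- (Lemma `topsymp`) The product `e₁ e₂ ⋯ e_g` of all the elementary symmetric
polynomials does not lie in the ideal `I_g`; it generates the top-degree
cohomology of the compact dual of the Siegel upper half space. -/
theorem stmt_1 (g : ℕ) (hg : 1 ≤ g) :
    ∏ j ∈ Finset.Icc 1 g, esymm (Fin g) ℂ j ∉ Ig g := by
  intro hmem
  have hmul : (monomial (TopSympAux.alf g)) (1 : ℂ) * ∏ j ∈ Finset.Icc 1 g, esymm (Fin g) ℂ j ∈ Ig g :=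
    Ideal.mul_mem_left _ _ hmem
  simp only [Ig, esq] at hmul
  have h0 := TopSympAux.Lfun_vanish g hmul
  rw [TopSympAux.Lfun_top g] at h0
  rcases Int.units_eq_one_or (Equiv.Perm.sign (Fin.revPerm : Equiv.Perm (Fin g))) with h | h <;>
    rw [h] at h0 <;> norm_num at h0

end TopSympAuxSection
end

section
/- Let g ≥ 2 and let φ : ℂ[x₁,…,x_g] → ℂ[x₂,…,x_g] be the ring homomorphism with φ(x₁) = 0 and φ(x_i) = x_i for i ≥ 2. Then for every symmetric polynomial f ∈ ℂ[x₁,…,x_g] (invariant under all permutations of x₁,…,x_g), φ(f) lies in the ideal I_{g−1} of ℂ[x₂,…,x_g] if and only if there exists a symmetric polynomial h ∈ ℂ[x₁,…,x_g] with f − e_g·h ∈ I_g. In other words, the kernel of the induced map between the two quotient rings is the ideal generated by σ_g. -/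
open MvPolynomial

/-- The ring homomorphism `ℂ[x₁,…,x_g] → ℂ[x₂,…,x_g]` (with `g = n + 1`)
sending the first variable to `0` and the other variables to themselves. -/
noncomputable def phi (n : ℕ) :
    MvPolynomial (Fin (n + 1)) ℂ →ₐ[ℂ] MvPolynomial (Fin n) ℂ :=
  aeval (Fin.cases 0 (fun i => X i))

namespace SPAux

open Finset

/-- esymm of a multiset with a `0` adjoined. -/
lemma esymm_cons_zero {R : Type*} [CommSemiring R] (s : Multiset R) {k : ℕ}
    (hk : k ≠ 0) : ((0 : R) ::ₘ s).esymm k = s.esymm k := by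
  obtain ⟨m, rfl⟩ := Nat.exists_eq_succ_of_ne_zero hk
  simp [Multiset.esymm, Multiset.powersetCard_cons]

lemma esymm_eq_zero (g k : ℕ) (h : g < k) : esymm (Fin g) ℂ k = 0 := by
  rw [esymm]
  rw [show (powersetCard k (univ : Finset (Fin g))) = ∅ by
    rw [Finset.powersetCard_eq_empty]; simpa using h]
  simp

lemma esymm_top (g : ℕ) : esymm (Fin g) ℂ g = ∏ i, X i := by
  have h := Finset.powersetCard_self (univ : Finset (Fin g))
  simp only [Finset.card_fin] at h
  rw [esymm, h, Finset.sum_singleton]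

lemma phi_esymm (n k : ℕ) :
    phi n (esymm (Fin (n + 1)) ℂ k) = esymm (Fin n) ℂ k := by
  rcases Nat.eq_zero_or_pos k with rfl | hk
  · simp [esymm_zero]
  · rw [phi, aeval_esymm_eq_multiset_esymm, esymm_eq_multiset_esymm]
    have huniv : (univ : Finset (Fin (n + 1))).val.map
        (Fin.cases 0 (fun i => X i) : Fin (n + 1) → MvPolynomial (Fin n) ℂ)
        = (0 : MvPolynomial (Fin n) ℂ) ::ₘ (univ : Finset (Fin n)).val.map X := by
      rw [Fin.univ_succ, Finset.cons_val, Multiset.map_cons, Finset.map_val,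
        Multiset.map_map]
      simp only [Function.comp_def, Function.Embedding.coeFn_mk, Fin.cases_zero,
        Fin.cases_succ]
    rw [huniv, esymm_cons_zero _ (by omega)]

lemma phi_comp_aeval (n : ℕ) :
    (phi n).comp (aeval fun i : Fin (n + 1) =>
        (X i : MvPolynomial (Fin (n + 1)) ℂ) ^ 2)
      = (aeval fun j : Fin n => (X j : MvPolynomial (Fin n) ℂ) ^ 2).comp
          (phi n) := by
  apply MvPolynomial.algHom_ext
  intro i
  induction i using Fin.cases with
  | zero => simp [phi]
  | succ j => simp [phi]

lemma phi_esq (n k : ℕ) : phi n (esq (n + 1) k) = esq n k := by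
  have h := congrFun (congrArg DFunLike.coe (phi_comp_aeval n))
    (esymm (Fin (n + 1)) ℂ k)
  simp only [AlgHom.coe_comp, Function.comp_apply] at h
  rw [esq, h, phi_esymm, esq]

lemma rename_comp_aeval_sq (g : ℕ) (e : Equiv.Perm (Fin g)) :
    (rename (R := ℂ) ⇑e).comp (aeval fun i : Fin g =>
        (X i : MvPolynomial (Fin g) ℂ) ^ 2)
      = (aeval fun i : Fin g => (X i : MvPolynomial (Fin g) ℂ) ^ 2).comp
          (rename ⇑e) := by
  apply MvPolynomial.algHom_ext
  intro i
  simp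

lemma esq_isSymmetric (g k : ℕ) : (esq g k).IsSymmetric := by
  intro e
  have h := congrFun (congrArg DFunLike.coe (rename_comp_aeval_sq g e))
    (esymm (Fin g) ℂ k)
  simp only [AlgHom.coe_comp, Function.comp_apply] at h
  rw [esq, h, esymm_isSymmetric _ _ _ e]

lemma mem_Ig (g k : ℕ) (h1 : 1 ≤ k) (h2 : k ≤ g) : esq g k ∈ Ig g :=
  Ideal.subset_span ⟨k, h1, h2, rfl⟩

lemma esq_eq_zero (g k : ℕ) (h : g < k) : esq g k = 0 := by
  rw [esq, esymm_eq_zero g k h, map_zero]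

lemma Ig_eq_span (g : ℕ) :
    Ig g = Ideal.span (Set.range fun j : Fin g => esq g (j + 1)) := by
  rw [Ig]
  congr 1
  ext p
  constructor
  · rintro ⟨k, h1, h2, rfl⟩
    exact ⟨⟨k - 1, by omega⟩, by simp; congr 1; omega⟩
  · rintro ⟨j, rfl⟩
    exact ⟨j + 1, by omega, by have := j.isLt; omega, rfl⟩

lemma phi_Ig (n : ℕ) {p : MvPolynomial (Fin (n + 1)) ℂ} (hp : p ∈ Ig (n + 1)) :
    phi n p ∈ Ig n := by
  have h1 : phi n p ∈ Ideal.map (phi n).toRingHom (Ig (n + 1)) :=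
    Ideal.mem_map_of_mem _ hp
  rw [Ig, Ideal.map_span] at h1
  refine Ideal.span_le.mpr ?_ h1
  rintro _ ⟨q, ⟨k, hk1, hk2, rfl⟩, rfl⟩
  show phi n (esq (n + 1) k) ∈ Ig n
  rw [phi_esq]
  rcases Nat.lt_or_ge n k with h | h
  · rw [esq_eq_zero n k h]; exact (Ig n).zero_mem
  · exact mem_Ig n k hk1 h

lemma Ig_rename (g : ℕ) (e : Equiv.Perm (Fin g)) {p : MvPolynomial (Fin g) ℂ}
    (hp : p ∈ Ig g) : rename e p ∈ Ig g := by
  have h1 : rename e p ∈ Ideal.map (rename (R := ℂ) e).toRingHom (Ig g) :=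
    Ideal.mem_map_of_mem _ hp
  rw [Ig, Ideal.map_span] at h1
  refine Ideal.span_le.mpr ?_ h1
  rintro _ ⟨q, ⟨k, hk1, hk2, rfl⟩, rfl⟩
  show rename e (esq g k) ∈ Ig g
  rw [esq_isSymmetric g k e]
  exact mem_Ig g k hk1 hk2

lemma phi_symm (n : ℕ) {f : MvPolynomial (Fin (n + 1)) ℂ} (hf : f.IsSymmetric) :
    (phi n f).IsSymmetric := by
  intro e
  set e' : Equiv.Perm (Fin (n + 1)) := Equiv.Perm.decomposeFin.symm (0, e) with he'
  have hcomp : (rename (R := ℂ) ⇑e).comp (phi n) = (phi n).comp (rename ⇑e') := by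
    apply MvPolynomial.algHom_ext
    intro i
    induction i using Fin.cases with
    | zero =>
      have h0 : e' 0 = 0 := Equiv.Perm.decomposeFin_symm_apply_zero 0 e
      simp [phi, h0]
    | succ j =>
      have hsucc : e' j.succ = (e j).succ := by
        rw [he', Equiv.Perm.decomposeFin_symm_apply_succ, Equiv.swap_self]
        rfl
      simp [phi, hsucc]
  have h := congrFun (congrArg DFunLike.coe hcomp) f
  simp only [AlgHom.coe_comp, Function.comp_apply] at h
  rw [h, hf e']

lemma phi_zero_dvd (n : ℕ) {u : MvPolynomial (Fin (n + 1)) ℂ}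
    (hu : phi n u = 0) : (X 0 : MvPolynomial (Fin (n + 1)) ℂ) ∣ u := by
  have key : ∀ v : MvPolynomial (Fin (n + 1)) ℂ,
      phi n v = Polynomial.eval 0 (finSuccEquiv ℂ n v) := by
    have hh : (phi n).toRingHom
        = (Polynomial.evalRingHom 0).comp
            (finSuccEquiv ℂ n).toAlgHom.toRingHom := by
      apply MvPolynomial.ringHom_ext
      · intro c
        simp [phi, finSuccEquiv_apply]
      · intro i
        induction i using Fin.cases with
        | zero => simp [phi, finSuccEquiv_X_zero]
        | succ j => simp [phi, finSuccEquiv_X_succ]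
    intro v
    exact congrFun (congrArg DFunLike.coe hh) v
  have h0 : (finSuccEquiv ℂ n u).coeff 0 = 0 := by
    rw [Polynomial.coeff_zero_eq_eval_zero, ← key u, hu]
  obtain ⟨q, hq⟩ := Polynomial.X_dvd_iff.mpr h0
  refine ⟨(finSuccEquiv ℂ n).symm q, ?_⟩
  have : u = (finSuccEquiv ℂ n).symm (Polynomial.X * q) := by
    rw [← hq, AlgEquiv.symm_apply_apply]
  rw [this, map_mul]
  congr 1
  rw [← finSuccEquiv_X_zero (R := ℂ) (n := n), AlgEquiv.symm_apply_apply]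

lemma X_not_dvd {g : ℕ} {i j : Fin g} (hij : i ≠ j) :
    ¬ (X i : MvPolynomial (Fin g) ℂ) ∣ X j := by
  rintro ⟨w, hw⟩
  have h := congrArg (eval (fun t : Fin g => if t = j then (1 : ℂ) else 0)) hw
  simp [hij] at h

lemma prime_X_mv (n : ℕ) (i : Fin (n + 1)) :
    Prime (X i : MvPolynomial (Fin (n + 1)) ℂ) := by
  have h0 : Prime (X 0 : MvPolynomial (Fin (n + 1)) ℂ) := by
    refine (MulEquiv.prime_iff (finSuccEquiv ℂ n).toMulEquiv).mp ?_
    show Prime (finSuccEquiv ℂ n (X 0))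
    rw [finSuccEquiv_X_zero]
    exact Polynomial.prime_X
  have h1 := (MulEquiv.prime_iff
      (renameEquiv ℂ (Equiv.swap (0 : Fin (n + 1)) i)).toMulEquiv).mpr h0
  have h2 : (renameEquiv ℂ (Equiv.swap (0 : Fin (n + 1)) i)).toMulEquiv
      (X 0 : MvPolynomial (Fin (n + 1)) ℂ) = X i := by
    show renameEquiv ℂ (Equiv.swap (0 : Fin (n + 1)) i) (X 0) = X i
    rw [renameEquiv_apply, rename_X, Equiv.swap_apply_left]
  rwa [h2] at h1

lemma prod_X_dvd (n : ℕ) {u : MvPolynomial (Fin (n + 1)) ℂ}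
    (h : ∀ i, (X i : MvPolynomial (Fin (n + 1)) ℂ) ∣ u) :
    (∏ i, (X i : MvPolynomial (Fin (n + 1)) ℂ)) ∣ u := by
  suffices hs : ∀ s : Finset (Fin (n + 1)),
      (∏ i ∈ s, (X i : MvPolynomial (Fin (n + 1)) ℂ)) ∣ u from hs univ
  intro s
  induction s using Finset.cons_induction with
  | empty => simpa using one_dvd u
  | cons a s ha ih =>
    obtain ⟨v, hv⟩ := ih
    have hp := prime_X_mv n a
    have hdvd : (X a : MvPolynomial (Fin (n + 1)) ℂ) ∣ (∏ i ∈ s, X i) * v :=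
      hv ▸ h a
    rcases hp.2.2 _ _ hdvd with h1 | h1
    · exfalso
      obtain ⟨i, hi, hdd⟩ := (hp.dvd_finset_prod_iff _).mp h1
      exact X_not_dvd (fun he : a = i => ha (he ▸ hi)) hdd
    · obtain ⟨w, hw⟩ := h1
      refine ⟨w, ?_⟩
      rw [Finset.prod_cons, hv, hw]
      ring

end SPAux

open SPAux Finset

/-- (proof of Lemma `sp`) For `g = n + 1 ≥ 2` and a symmetric polynomial `f`
in `g` variables, `φ(f)` lies in `I_{g-1}` iff `f` is congruent mod `I_g` to a
multiple `e_g · h` of the top elementary symmetric polynomial by a symmetric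
polynomial `h`: the kernel of the induced map of quotient rings is the ideal
generated by `σ_g`. -/
theorem stmt_3 (n : ℕ) (hn : 1 ≤ n) (f : MvPolynomial (Fin (n + 1)) ℂ)
    (hf : f.IsSymmetric) :
    phi n f ∈ Ig n ↔
      ∃ h : MvPolynomial (Fin (n + 1)) ℂ, h.IsSymmetric ∧
        f - esymm (Fin (n + 1)) ℂ (n + 1) * h ∈ Ig (n + 1) := by
  constructor
  · intro hm
    have hs := phi_symm n hf
    rw [Ig_eq_span] at hm
    obtain ⟨c, hc⟩ := (Ideal.mem_span_range_iff_exists_fun).mp hm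
    set N : ℂ := (Fintype.card (Equiv.Perm (Fin n)) : ℂ) with hNdef
    have hN : N ≠ 0 := Nat.cast_ne_zero.mpr Fintype.card_ne_zero
    set d : Fin n → MvPolynomial (Fin n) ℂ :=
      fun k => N⁻¹ • ∑ e : Equiv.Perm (Fin n), rename e (c k) with hd
    have hd_symm : ∀ k, (d k).IsSymmetric := by
      intro k τ
      rw [hd]
      simp only [map_smul, map_sum]
      congr 1
      rw [show (∑ e : Equiv.Perm (Fin n), rename τ (rename e (c k)))
          = ∑ e : Equiv.Perm (Fin n), rename (τ * e : Equiv.Perm (Fin n)) (c k) by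
        refine Finset.sum_congr rfl fun e _ => ?_
        rw [rename_rename]
        rfl]
      exact Fintype.sum_equiv (Equiv.mulLeft τ) _ _ (fun e => rfl)
    have step : ∀ e : Equiv.Perm (Fin n),
        (∑ k : Fin n, rename e (c k) * esq n (k + 1)) = phi n f := by
      intro e
      conv_rhs => rw [← hs e, ← hc]
      rw [map_sum]
      exact Finset.sum_congr rfl fun k _ => by
        rw [map_mul, esq_isSymmetric n (k + 1) e]
    have hd_eq : ∑ k : Fin n, d k * esq n (k + 1) = phi n f := by
      calc ∑ k : Fin n, d k * esq n (k + 1)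
          = N⁻¹ • ∑ k : Fin n,
              (∑ e : Equiv.Perm (Fin n), rename e (c k)) * esq n (k + 1) := by
            rw [Finset.smul_sum]
            exact Finset.sum_congr rfl fun k _ => smul_mul_assoc _ _ _
        _ = N⁻¹ • ∑ e : Equiv.Perm (Fin n),
              ∑ k : Fin n, rename e (c k) * esq n (k + 1) := by
            refine congrArg (N⁻¹ • ·) ?_
            rw [Finset.sum_comm]
            exact Finset.sum_congr rfl fun k _ => Finset.sum_mul _ _ _
        _ = N⁻¹ • ∑ _e : Equiv.Perm (Fin n), phi n f := by
            refine congrArg (N⁻¹ • ·) ?_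
            exact Finset.sum_congr rfl fun e _ => step e
        _ = phi n f := by
            rw [Finset.sum_const, Finset.card_univ, ← Nat.cast_smul_eq_nsmul ℂ,
              smul_smul, ← hNdef, inv_mul_cancel₀ hN, one_smul]
    have hlift : ∀ k : Fin n, ∃ D : MvPolynomial (Fin (n + 1)) ℂ,
        D.IsSymmetric ∧ phi n D = d k := by
      intro k
      obtain ⟨P, hP⟩ := esymmAlgHom_surjective (σ := Fin n) (R := ℂ) (n := n)
        (by simp) ⟨d k, hd_symm k⟩
      refine ⟨(esymmAlgHom (Fin (n + 1)) ℂ n P).val,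
        (esymmAlgHom (Fin (n + 1)) ℂ n P).2, ?_⟩
      rw [esymmAlgHom_apply, comp_aeval_apply]
      rw [show (fun i : Fin n => phi n (esymm (Fin (n + 1)) ℂ (i + 1)))
          = fun i : Fin n => esymm (Fin n) ℂ (i + 1) by
        funext i; exact phi_esymm n (i + 1)]
      have := congrArg Subtype.val hP
      rw [esymmAlgHom_apply] at this
      exact this
    choose D hDsymm hDphi using hlift
    set r : MvPolynomial (Fin (n + 1)) ℂ :=
      ∑ k : Fin n, D k * esq (n + 1) (k + 1) with hr
    have hrI : r ∈ Ig (n + 1) :=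
      Ideal.sum_mem _ fun k _ => Ideal.mul_mem_left _ _
        (mem_Ig (n + 1) (k + 1) (by omega) (by have := k.isLt; omega))
    have hr_symm : r.IsSymmetric := by
      intro e
      rw [hr, map_sum]
      exact Finset.sum_congr rfl fun k _ => by
        rw [map_mul, hDsymm k e, esq_isSymmetric (n + 1) (k + 1) e]
    have hphir : phi n r = phi n f := by
      rw [hr, map_sum, ← hd_eq]
      exact Finset.sum_congr rfl fun k _ => by
        rw [map_mul, hDphi k, phi_esq]
    have hu0 : phi n (f - r) = 0 := by rw [map_sub, hphir, sub_self]
    have husymm : (f - r).IsSymmetric := hf.sub hr_symm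
    have hX : ∀ i, (X i : MvPolynomial (Fin (n + 1)) ℂ) ∣ (f - r) := by
      intro i
      obtain ⟨v, hv⟩ := phi_zero_dvd n hu0
      rw [← husymm (Equiv.swap 0 i), hv, map_mul, rename_X, Equiv.swap_apply_left]
      exact ⟨_, rfl⟩
    have hprod : esymm (Fin (n + 1)) ℂ (n + 1) ∣ (f - r) := by
      rw [esymm_top]
      exact prod_X_dvd n hX
    obtain ⟨h, hh⟩ := hprod
    have hesym_ne : esymm (Fin (n + 1)) ℂ (n + 1) ≠ 0 := by
      rw [esymm_top]
      exact Finset.prod_ne_zero_iff.mpr fun i _ => X_ne_zero i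
    have hhsymm : h.IsSymmetric := by
      intro e
      have h2 := husymm e
      rw [hh, map_mul, esymm_isSymmetric _ _ _ e] at h2
      exact mul_left_cancel₀ hesym_ne h2
    refine ⟨h, hhsymm, ?_⟩
    rw [← hh, sub_sub_cancel]
    exact hrI
  · rintro ⟨h, hhs, hmem⟩
    have h1 := phi_Ig n hmem
    rw [map_sub, map_mul, phi_esymm, esymm_eq_zero n (n + 1) (by omega),
      zero_mul, sub_zero] at h1
    exact h1
end

section
/- Let a ≥ b ≥ 1, g = a + b, and 0 ≤ k ≤ b. Then in ℂ[x₁,…,x_g] the difference e_g · e_{g−2} ⋯ e_{g−2k} − (α_a · α_{a−1} ⋯ α_{a−k}) · (β_b · β_{b−1} ⋯ β_{b−k}) belongs to the ideal I_a + I_b. That is, the image of σ_g σ_{g−2} ⋯ σ_{g−2k} under the restriction map to the product of compact duals is α_a α_{a−1} ⋯ α_{a−k} ⊗ β_b β_{b−1} ⋯ β_{b−k}. -/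
open MvPolynomial

/-- `α_r`, the `r`-th elementary symmetric polynomial in the first `a`
variables `x₁,…,x_a` of `ℂ[x₁,…,x_{a+b}]` (zero for `r > a`). -/
noncomputable def alph (a b r : ℕ) : MvPolynomial (Fin (a + b)) ℂ :=
  rename (Fin.castAdd b) (esymm (Fin a) ℂ r)

/-- `β_s`, the `s`-th elementary symmetric polynomial in the last `b`
variables `x_{a+1},…,x_{a+b}` of `ℂ[x₁,…,x_{a+b}]` (zero for `s > b`). -/
noncomputable def bet (a b s : ℕ) : MvPolynomial (Fin (a + b)) ℂ :=
  rename (Fin.natAdd a) (esymm (Fin b) ℂ s)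

/-- The ideal `I_a` generated by `e_r(x₁²,…,x_a²)` for `1 ≤ r ≤ a`. -/
noncomputable def Ia (a b : ℕ) : Ideal (MvPolynomial (Fin (a + b)) ℂ) :=
  Ideal.span {p | ∃ r : ℕ, 1 ≤ r ∧ r ≤ a ∧ p = rename (Fin.castAdd b) (esq a r)}

/-- The ideal `I_b` generated by `e_s(x_{a+1}²,…,x_{a+b}²)` for `1 ≤ s ≤ b`. -/
noncomputable def Ib (a b : ℕ) : Ideal (MvPolynomial (Fin (a + b)) ℂ) :=
  Ideal.span {p | ∃ s : ℕ, 1 ≤ s ∧ s ≤ b ∧ p = rename (Fin.natAdd a) (esq b s)}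

set_option linter.unusedSectionVars false


section Aux


open MvPolynomial Finset

variable {R : Type*} [CommRing R] {σ : Type*} [DecidableEq σ]

/-- elementary symmetric function of values -/
noncomputable def elem (s : Finset σ) (x : σ → R) (k : ℕ) : R :=
  ∑ t ∈ s.powersetCard k, ∏ i ∈ t, x i

lemma elem_eq_zero (s : Finset σ) (x : σ → R) {k : ℕ} (h : s.card < k) :
    elem s x k = 0 := by
  rw [elem, powersetCard_eq_empty.2 h, sum_empty]

lemma elem_neg (s : Finset σ) (x : σ → R) (k : ℕ) :
    elem s (fun i => - x i) k = (-1) ^ k * elem s x k := by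
  rw [elem, elem, mul_sum]
  refine sum_congr rfl fun t ht => ?_
  have hcard : t.card = k := (mem_powersetCard.mp ht).2
  rw [← hcard]
  have : ∀ i ∈ t, - x i = (-1) * x i := fun i _ => by ring
  rw [prod_congr rfl this, prod_mul_distrib, prod_const]

lemma prod_one_add_coeff (s : Finset σ) (x : σ → R) (d : ℕ) (hd : 0 < d) (n : ℕ) :
    (∏ i ∈ s, (1 + Polynomial.C (x i) * Polynomial.X ^ d)).coeff n
      = if d ∣ n then elem s x (n / d) else 0 := by
  have h1 : ∀ i ∈ s, (1 + Polynomial.C (x i) * Polynomial.X ^ d)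
      = (Polynomial.C (x i) * Polynomial.X ^ d) + 1 := fun i _ => by ring
  rw [prod_congr rfl h1, Finset.prod_add]
  have h2 : ∀ t ∈ s.powerset,
      ((∏ i ∈ t, Polynomial.C (x i) * Polynomial.X ^ d) * ∏ i ∈ s \ t, (1:Polynomial R))
      = Polynomial.C (∏ i ∈ t, x i) * Polynomial.X ^ (d * t.card) := fun t _ => by
    rw [prod_const_one, mul_one, prod_mul_distrib, prod_const, ← pow_mul, map_prod]
  rw [sum_congr rfl h2, Polynomial.finset_sum_coeff]
  have h3 : ∀ t : Finset σ, (Polynomial.C (∏ i ∈ t, x i) * Polynomial.X ^ (d * t.card)).coeff n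
      = if n = d * t.card then ∏ i ∈ t, x i else 0 := fun t => by
    rw [Polynomial.coeff_C_mul, Polynomial.coeff_X_pow]
    split <;> simp
  rw [sum_congr rfl fun t _ => h3 t]
  by_cases hdn : d ∣ n
  · obtain ⟨m, rfl⟩ := hdn
    simp only [if_pos (dvd_mul_right d m), Nat.mul_div_cancel_left m hd]
    rw [elem, powersetCard_eq_filter, sum_filter]
    refine sum_congr rfl fun t _ => ?_
    have : d * m = d * t.card ↔ t.card = m := by
      constructor
      · intro h; exact (Nat.eq_of_mul_eq_mul_left hd h).symm
      · intro h; rw [h]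
    simp only [this]
  · rw [if_neg hdn]
    refine sum_eq_zero fun t _ => ?_
    rw [if_neg]
    intro h; exact hdn ⟨t.card, h⟩

lemma neg_one_pow_sub_eq {n k : ℕ} (hk : k ≤ n) (hn : Even n) :
    ((-1 : R)) ^ (n - k) = (-1) ^ k := by
  have h1 : ((-1 : R)) ^ (n - k) * (-1) ^ k = (-1) ^ n := by
    rw [← pow_add, Nat.sub_add_cancel hk]
  have h2 : ((-1 : R)) ^ n = 1 := hn.neg_one_pow
  have h3 : ((-1 : R)) ^ k * (-1) ^ k = 1 := by
    rw [← pow_add, ← two_mul, pow_mul, neg_one_sq, one_pow]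
  calc ((-1 : R)) ^ (n - k) = ((-1:R)) ^ (n-k) * ((-1) ^ k * (-1) ^ k) := by rw [h3, mul_one]
    _ = ((-1:R)) ^ n * (-1) ^ k := by rw [← mul_assoc, h1]
    _ = (-1) ^ k := by rw [h2, one_mul]

/-- the key relation coming from `∏(1+xᵢT)·∏(1-xᵢT) = ∏(1-xᵢ²T²)`. -/
lemma elem_square_relation (s : Finset σ) (x : σ → R) (m : ℕ) :
    ∑ q ∈ Finset.range (2 * m + 1), (-1) ^ q * elem s x (2 * m - q) * elem s x q
      = (-1) ^ m * elem s (fun i => (x i) ^ 2) m := by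
  have hB : (∏ i ∈ s, (1 + Polynomial.C (x i) * Polynomial.X ^ 1))
        * (∏ i ∈ s, (1 + Polynomial.C (- x i) * Polynomial.X ^ 1))
      = ∏ i ∈ s, (1 + Polynomial.C (- (x i) ^ 2) * Polynomial.X ^ 2) := by
    rw [← prod_mul_distrib]
    refine prod_congr rfl fun i _ => ?_
    simp only [map_neg, map_pow, pow_one]
    ring
  have := congrArg (fun p => Polynomial.coeff p (2 * m)) hB
  simp only [Polynomial.coeff_mul] at this
  rw [prod_one_add_coeff s _ 2 (by norm_num) (2*m)] at this
  rw [if_pos ⟨m, rfl⟩, Nat.mul_div_cancel_left m (by norm_num), elem_neg] at this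
  have hL : ∑ p ∈ Finset.HasAntidiagonal.antidiagonal (2 * m),
      (∏ i ∈ s, (1 + Polynomial.C (x i) * Polynomial.X ^ 1)).coeff p.1
      * (∏ i ∈ s, (1 + Polynomial.C (- x i) * Polynomial.X ^ 1)).coeff p.2
      = ∑ q ∈ Finset.range (2 * m + 1), (-1) ^ q * elem s x (2 * m - q) * elem s x q := by
    rw [Finset.Nat.sum_antidiagonal_eq_sum_range_succ_mk]
    refine sum_congr rfl fun p hp => ?_
    have hple : p ≤ 2 * m := Nat.lt_succ_iff.mp (mem_range.mp hp)
    rw [prod_one_add_coeff s x 1 one_pos p, prod_one_add_coeff s _ 1 one_pos (2*m-p)]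
    simp only [if_pos (one_dvd _), Nat.div_one]
    rw [elem_neg, neg_one_pow_sub_eq hple (even_two_mul m)]
    ring
  rw [hL] at this
  exact this

section IdealLemmas

variable {S : Type*} [CommRing S] {E : ℕ → S} {J : Ideal S} {n : ℕ}

lemma lemmaN
    (hrel : ∀ m, 1 ≤ m → m ≤ n →
      (∑ q ∈ Finset.range (2*m+1), (-1)^q * E (2*m-q) * E q) ∈ J)
    (hzero : ∀ r, n < r → E r = 0) :
    ∀ i, i < n → (∏ j ∈ Finset.range i, E (n - j)) * E (n - i) * E (n - i) ∈ J := by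
  intro i
  induction i using Nat.strong_induction_on with
  | _ i IH =>
    intro hi
    set m := n - i with hm
    have hm1 : 1 ≤ m := by omega
    have hm2 : m ≤ n := by omega
    set P := ∏ j ∈ Finset.range i, E (n - j) with hP
    have hPS : P * (∑ q ∈ Finset.range (2*m+1), (-1)^q * E (2*m-q) * E q) ∈ J :=
      Ideal.mul_mem_left _ _ (hrel m hm1 hm2)
    have hT : ∀ p q : ℕ, p + q = 2*m → m < p → P * E p * E q ∈ J := by
      intro p q hpq hp
      by_cases hpn : n < p
      · rw [hzero p hpn, mul_zero, zero_mul]; exact J.zero_mem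
      · push_neg at hpn
        have hi' : n - p < i := by omega
        have hi'n : n - p < n := by omega
        have hni' : n - (n - p) = p := by omega
        have hIH := IH (n - p) hi' hi'n
        have hdecomp : P * E p * E q
            = ((∏ j ∈ Finset.Ico (n - p + 1) i, E (n - j)) * E q)
              * ((∏ j ∈ Finset.range (n - p), E (n - j)) * E (n - (n - p)) * E (n - (n - p))) := by
          have h1 : P = (∏ j ∈ Finset.range (n - p + 1), E (n - j))
              * ∏ j ∈ Finset.Ico (n - p + 1) i, E (n - j) :=
            (Finset.prod_range_mul_prod_Ico _ (by omega)).symm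
          rw [h1, Finset.prod_range_succ, hni']; ring
        rw [hdecomp]
        exact Ideal.mul_mem_left _ _ hIH
    have hmem : m ∈ Finset.range (2*m+1) := by simp; omega
    have hsplit : P * (∑ q ∈ Finset.range (2*m+1), (-1)^q * E (2*m-q) * E q)
        = (-1)^m * (P * E m * E m)
          + ∑ q ∈ (Finset.range (2*m+1)).erase m, (-1)^q * (P * E (2*m-q) * E q) := by
      rw [Finset.mul_sum, ← Finset.add_sum_erase _ _ hmem]
      have h2m : 2*m - m = m := by omega
      rw [h2m]
      congr 1
      · ring
      · exact Finset.sum_congr rfl fun q _ => by ring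
    have herased : (∑ q ∈ (Finset.range (2*m+1)).erase m, (-1)^q * (P * E (2*m-q) * E q)) ∈ J := by
      refine Ideal.sum_mem _ fun q hq => ?_
      have hq1 : q ≠ m := (Finset.mem_erase.mp hq).1
      have hq2 : q ≤ 2*m := by
        have := Finset.mem_range.mp (Finset.mem_erase.mp hq).2; omega
      rcases lt_or_gt_of_ne hq1 with h | h
      · exact Ideal.mul_mem_left _ _ (hT (2*m - q) q (by omega) (by omega))
      · have : P * E (2*m - q) * E q = P * E q * E (2*m - q) := by ring
        rw [this]
        exact Ideal.mul_mem_left _ _ (hT q (2*m - q) (by omega) h)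
    have hkey : (-1:S)^m * (P * E m * E m) ∈ J := by
      have := J.sub_mem hPS herased
      rw [hsplit] at this
      simpa using this
    have := Ideal.mul_mem_left _ ((-1:S)^m) hkey
    rw [← mul_assoc, ← pow_add, ← two_mul, pow_mul, neg_one_sq, one_pow, one_mul] at this
    exact this

lemma lemmaL
    (hrel : ∀ m, 1 ≤ m → m ≤ n →
      (∑ q ∈ Finset.range (2*m+1), (-1)^q * E (2*m-q) * E q) ∈ J)
    (hzero : ∀ r, n < r → E r = 0) :
    ∀ i k, i < k → k ≤ n → (∏ j ∈ Finset.range k, E (n - j)) * E (n - i) ∈ J := by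
  intro i k hik hkn
  have hdecomp : (∏ j ∈ Finset.range k, E (n - j)) * E (n - i)
      = (∏ j ∈ Finset.Ico (i+1) k, E (n - j))
        * ((∏ j ∈ Finset.range i, E (n - j)) * E (n - i) * E (n - i)) := by
    rw [← Finset.prod_range_mul_prod_Ico (fun j => E (n - j)) (by omega : i + 1 ≤ k),
      Finset.prod_range_succ]
    ring
  rw [hdecomp]
  exact Ideal.mul_mem_left _ _ (lemmaN hrel hzero i (by omega))

end IdealLemmas

lemma alph_eq (a b r : ℕ) :
    alph a b r = elem Finset.univ (fun i : Fin a => (X (Fin.castAdd b i) : MvPolynomial (Fin (a+b)) ℂ)) r := by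
  simp [alph, esymm, elem, map_sum, map_prod, rename_X]

lemma bet_eq (a b s : ℕ) :
    bet a b s = elem Finset.univ (fun i : Fin b => (X (Fin.natAdd a i) : MvPolynomial (Fin (a+b)) ℂ)) s := by
  simp [bet, esymm, elem, map_sum, map_prod, rename_X]

lemma esq_rename_castAdd (a b r : ℕ) :
    rename (Fin.castAdd b) (esq a r)
      = elem Finset.univ (fun i : Fin a => (X (Fin.castAdd b i) : MvPolynomial (Fin (a+b)) ℂ) ^ 2) r := by
  simp [esq, esymm, elem, map_sum, map_prod, map_pow, aeval_X, rename_X]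

lemma esq_rename_natAdd (a b s : ℕ) :
    rename (Fin.natAdd a) (esq b s)
      = elem Finset.univ (fun i : Fin b => (X (Fin.natAdd a i) : MvPolynomial (Fin (a+b)) ℂ) ^ 2) s := by
  simp [esq, esymm, elem, map_sum, map_prod, map_pow, aeval_X, rename_X]

lemma alph_zero (a b : ℕ) {r : ℕ} (h : a < r) : alph a b r = 0 := by
  rw [alph_eq, elem_eq_zero]
  simpa using h

lemma bet_zero (a b : ℕ) {s : ℕ} (h : b < s) : bet a b s = 0 := by
  rw [bet_eq, elem_eq_zero]
  simpa using h

lemma alph_relation (a b : ℕ) {m : ℕ} (h1 : 1 ≤ m) (h2 : m ≤ a) :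
    (∑ q ∈ Finset.range (2*m+1), (-1)^q * alph a b (2*m-q) * alph a b q) ∈ Ia a b := by
  have hrel := elem_square_relation (Finset.univ : Finset (Fin a))
    (fun i => (X (Fin.castAdd b i) : MvPolynomial (Fin (a+b)) ℂ)) m
  simp only [← alph_eq] at hrel
  rw [hrel, ← esq_rename_castAdd]
  exact Ideal.mul_mem_left _ _ (Ideal.subset_span ⟨m, h1, h2, rfl⟩)

lemma bet_relation (a b : ℕ) {m : ℕ} (h1 : 1 ≤ m) (h2 : m ≤ b) :
    (∑ q ∈ Finset.range (2*m+1), (-1)^q * bet a b (2*m-q) * bet a b q) ∈ Ib a b := by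
  have hrel := elem_square_relation (Finset.univ : Finset (Fin b))
    (fun i => (X (Fin.natAdd a i) : MvPolynomial (Fin (a+b)) ℂ)) m
  simp only [← bet_eq] at hrel
  rw [hrel, ← esq_rename_natAdd]
  exact Ideal.mul_mem_left _ _ (Ideal.subset_span ⟨m, h1, h2, rfl⟩)

lemma esymm_split (a b m : ℕ) :
    esymm (Fin (a+b)) ℂ m = ∑ p ∈ Finset.range (m+1), alph a b p * bet a b (m - p) := by
  have hF : (∏ i : Fin (a+b), (1 + Polynomial.C (X i : MvPolynomial (Fin (a+b)) ℂ) * Polynomial.X ^ 1))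
      = (∏ i : Fin a, (1 + Polynomial.C (X (Fin.castAdd b i) : MvPolynomial (Fin (a+b)) ℂ) * Polynomial.X ^ 1))
        * ∏ i : Fin b, (1 + Polynomial.C (X (Fin.natAdd a i) : MvPolynomial (Fin (a+b)) ℂ) * Polynomial.X ^ 1) :=
    Fin.prod_univ_add _
  have hc := congrArg (fun p => Polynomial.coeff p m) hF
  simp only [Polynomial.coeff_mul] at hc
  rw [prod_one_add_coeff Finset.univ _ 1 one_pos m, if_pos (one_dvd _), Nat.div_one] at hc
  rw [Finset.Nat.sum_antidiagonal_eq_sum_range_succ_mk] at hc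
  have he : esymm (Fin (a+b)) ℂ m = elem Finset.univ X m := by
    simp [esymm, elem]
  rw [he, hc]
  refine Finset.sum_congr rfl fun p hp => ?_
  rw [prod_one_add_coeff Finset.univ _ 1 one_pos p,
    prod_one_add_coeff Finset.univ _ 1 one_pos (m - p)]
  simp only [if_pos (one_dvd _), Nat.div_one]
  rw [alph_eq, bet_eq]

lemma alph_L (a b : ℕ) {i k : ℕ} (hik : i < k) (hkn : k ≤ a) :
    (∏ j ∈ Finset.range k, alph a b (a - j)) * alph a b (a - i) ∈ Ia a b :=
  lemmaL (E := alph a b) (n := a) (J := Ia a b)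
    (fun _ h1 h2 => alph_relation a b h1 h2) (fun _ hr => alph_zero a b hr) i k hik hkn

lemma bet_L (a b : ℕ) {i k : ℕ} (hik : i < k) (hkn : k ≤ b) :
    (∏ j ∈ Finset.range k, bet a b (b - j)) * bet a b (b - i) ∈ Ib a b :=
  lemmaL (E := bet a b) (n := b) (J := Ib a b)
    (fun _ h1 h2 => bet_relation a b h1 h2) (fun _ hr => bet_zero a b hr) i k hik hkn

end Aux

/-- (proof of Theorem `symplectic`) For `a ≥ b ≥ 1`, `g = a + b` and
`0 ≤ k ≤ b`, the element `e_g e_{g-2} ⋯ e_{g-2k} - (α_a α_{a-1} ⋯ α_{a-k}) ·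
(β_b β_{b-1} ⋯ β_{b-k})` lies in `I_a + I_b`. -/
theorem stmt_4 (a b k : ℕ) (hb : 1 ≤ b) (hab : b ≤ a) (hk : k ≤ b) :
    (∏ j ∈ Finset.range (k + 1), esymm (Fin (a + b)) ℂ (a + b - 2 * j)) -
      (∏ j ∈ Finset.range (k + 1), alph a b (a - j)) *
        (∏ j ∈ Finset.range (k + 1), bet a b (b - j)) ∈ Ia a b + Ib a b := by
  rw [Submodule.add_eq_sup]
  induction k with
  | zero =>
    simp only [zero_add, Finset.prod_range_one, Nat.mul_zero, Nat.sub_zero]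
    have h0 : esymm (Fin (a+b)) ℂ (a+b) = alph a b a * bet a b b := by
      rw [esymm_split]
      rw [Finset.sum_eq_single_of_mem a (by simp only [Finset.mem_range]; omega)]
      · rw [show a + b - a = b by omega]
      · intro p hp hpa
        rcases lt_or_gt_of_ne hpa with h | h
        · rw [bet_zero a b (by omega : b < a + b - p), mul_zero]
        · rw [alph_zero a b h, zero_mul]
    rw [h0, sub_self]
    exact zero_mem _
  | succ k IH =>
    have IH' := IH (by omega)
    rw [Finset.prod_range_succ _ (k+1), Finset.prod_range_succ _ (k+1),
      Finset.prod_range_succ _ (k+1)]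
    set E := ∏ j ∈ Finset.range (k + 1), esymm (Fin (a + b)) ℂ (a + b - 2 * j) with hE
    set A := ∏ j ∈ Finset.range (k + 1), alph a b (a - j) with hA
    set B := ∏ j ∈ Finset.range (k + 1), bet a b (b - j) with hB
    set m := a + b - 2 * (k + 1) with hm
    have key : A * B * esymm (Fin (a+b)) ℂ m
        - A * B * (alph a b (a - (k+1)) * bet a b (b - (k+1))) ∈ Ia a b ⊔ Ib a b := by
      rw [esymm_split a b m, Finset.mul_sum]
      have hp0 : a - (k+1) ∈ Finset.range (m+1) := by
        simp only [Finset.mem_range]; omega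
      rw [← Finset.add_sum_erase _ _ hp0]
      have hmb : m - (a - (k+1)) = b - (k+1) := by omega
      have hcancel : (A * B * (alph a b (a - (k+1)) * bet a b (m - (a - (k+1))))
            + ∑ p ∈ (Finset.range (m+1)).erase (a - (k+1)),
                A * B * (alph a b p * bet a b (m - p)))
          - A * B * (alph a b (a - (k+1)) * bet a b (b - (k+1)))
          = ∑ p ∈ (Finset.range (m+1)).erase (a - (k+1)),
              A * B * (alph a b p * bet a b (m - p)) := by
        rw [hmb]; ring
      rw [hcancel]
      refine Ideal.sum_mem _ fun p hp => ?_
      have hpne : p ≠ a - (k+1) := (Finset.mem_erase.mp hp).1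
      have hple : p ≤ m := by
        have := Finset.mem_range.mp (Finset.mem_erase.mp hp).2; omega
      by_cases h1 : a < p
      · rw [alph_zero a b h1, zero_mul, mul_zero]; exact zero_mem _
      · push_neg at h1
        by_cases h2 : a - (k+1) < p
        · have hmem := alph_L a b (i := a - p) (k := k+1) (by omega) (by omega)
          rw [show a - (a - p) = p by omega] at hmem
          have heq : A * B * (alph a b p * bet a b (m - p))
              = (A * alph a b p) * (B * bet a b (m - p)) := by ring
          rw [heq]
          exact Submodule.mem_sup_left (Ideal.mul_mem_right _ _ hmem)
        · push_neg at h2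
          by_cases h3 : b < m - p
          · rw [bet_zero a b h3, mul_zero, mul_zero]; exact zero_mem _
          · push_neg at h3
            have hmem := bet_L a b (i := b - (m - p)) (k := k+1) (by omega) (by omega)
            rw [show b - (b - (m - p)) = m - p by omega] at hmem
            have heq : A * B * (alph a b p * bet a b (m - p))
                = (B * bet a b (m - p)) * (A * alph a b p) := by ring
            rw [heq]
            exact Submodule.mem_sup_right (Ideal.mul_mem_right _ _ hmem)
    have hsum : E * esymm (Fin (a+b)) ℂ m
        - (A * alph a b (a - (k+1))) * (B * bet a b (b - (k+1)))
        = (E - A * B) * esymm (Fin (a+b)) ℂ m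
          + (A * B * esymm (Fin (a+b)) ℂ m
            - A * B * (alph a b (a - (k+1)) * bet a b (b - (k+1)))) := by ring
    rw [hsum]
    exact add_mem (Ideal.mul_mem_right _ _ IH') key
end

section
/- Let 1 ≤ p ≤ q. Then the polynomial e_q(y)^p (the p-th power of the top elementary symmetric polynomial in the y-variables) does NOT belong to the ideal J_{p,q} of ℂ[x₁,…,x_p, y₁,…,y_q]; equivalently, τ_q^p is a nonzero element (generating the top-degree cohomology, in degree 2pq) of the quotient ring presenting the cohomology of the Grassmannian. -/
open MvPolynomial

/-- `e_r(x)`, the `r`-th elementary symmetric polynomial in the `x`-variables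
`x₁,…,x_p` of `ℂ[x₁,…,x_p, y₁,…,y_q]` (zero for `r > p`, and `e₀ = 1`). -/
noncomputable def ex (p q r : ℕ) : MvPolynomial (Fin p ⊕ Fin q) ℂ :=
  rename Sum.inl (esymm (Fin p) ℂ r)

/-- `e_s(y)`, the `s`-th elementary symmetric polynomial in the `y`-variables
`y₁,…,y_q` of `ℂ[x₁,…,x_p, y₁,…,y_q]` (zero for `s > q`, and `e₀ = 1`). -/
noncomputable def ey (p q s : ℕ) : MvPolynomial (Fin p ⊕ Fin q) ℂ :=
  rename Sum.inr (esymm (Fin q) ℂ s)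

/-- `c_k = Σ_{r+s=k} e_r(x) e_s(y)`, the degree-`k` homogeneous component of
`∏ᵢ(1+xᵢ) · ∏ⱼ(1+yⱼ) - 1`. -/
noncomputable def ck (p q k : ℕ) : MvPolynomial (Fin p ⊕ Fin q) ℂ :=
  ∑ r ∈ Finset.range (k + 1), ex p q r * ey p q (k - r)

/-- The ideal `J_{p,q}` generated by the `c_k` for `1 ≤ k ≤ p + q`. -/
noncomputable def Jpq (p q : ℕ) : Ideal (MvPolynomial (Fin p ⊕ Fin q) ℂ) :=
  Ideal.span {f | ∃ k : ℕ, 1 ≤ k ∧ k ≤ p + q ∧ f = ck p q k}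

section AuxStmt7

open Finset

variable {ι : Type*} [Fintype ι] [DecidableEq ι]

/-- Antisymmetrization of a polynomial over the full symmetric group. -/
noncomputable def altPoly (f : MvPolynomial ι ℂ) : MvPolynomial ι ℂ :=
  ∑ σ : Equiv.Perm ι, ((Equiv.Perm.sign σ : ℤ) : ℂ) • rename (⇑σ) f

omit [Fintype ι] in
lemma swap_mapDomain {α : ι →₀ ℕ} {i j : ι} (hα : α i = α j) :
    Finsupp.mapDomain (⇑(Equiv.swap i j)) α = α := by
  ext b
  rw [Finsupp.mapDomain_equiv_apply, Equiv.symm_swap]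
  rcases eq_or_ne b i with rfl | hbi
  · rw [Equiv.swap_apply_left]; exact hα.symm
  rcases eq_or_ne b j with rfl | hbj
  · rw [Equiv.swap_apply_right]; exact hα
  · rw [Equiv.swap_apply_of_ne_of_ne hbi hbj]

lemma altPoly_coeff_eq_zero (f : MvPolynomial ι ℂ) (α : ι →₀ ℕ) {i j : ι}
    (hij : i ≠ j) (hα : α i = α j) : MvPolynomial.coeff α (altPoly f) = 0 := by
  set τ : Equiv.Perm ι := Equiv.swap i j with hτ
  have hτα : Finsupp.mapDomain (⇑τ) α = α := swap_mapDomain hα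
  have key : MvPolynomial.coeff α (altPoly f) = - MvPolynomial.coeff α (altPoly f) := by
    unfold altPoly
    rw [MvPolynomial.coeff_sum]
    conv_lhs => rw [← Equiv.sum_comp (Equiv.mulLeft τ)
      (fun σ : Equiv.Perm ι =>
        MvPolynomial.coeff α (((Equiv.Perm.sign σ : ℤ) : ℂ) • rename (⇑σ) f))]
    rw [← Finset.sum_neg_distrib]
    refine Finset.sum_congr rfl fun σ _ => ?_
    have hsign : ((Equiv.Perm.sign (Equiv.mulLeft τ σ) : ℤ) : ℂ)
        = -((Equiv.Perm.sign σ : ℤ) : ℂ) := by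
      simp [hτ, Equiv.Perm.sign_swap hij]
    have hren : rename (⇑(Equiv.mulLeft τ σ)) f = rename (⇑τ) (rename (⇑σ) f) := by
      rw [rename_rename]
      rfl
    have hco : MvPolynomial.coeff α (rename (⇑τ) (rename (⇑σ) f))
        = MvPolynomial.coeff α (rename (⇑σ) f) := by
      conv_lhs => rw [← hτα]
      rw [MvPolynomial.coeff_rename_mapDomain _ (Equiv.injective τ)]
    rw [hren, MvPolynomial.coeff_smul, MvPolynomial.coeff_smul, hco, hsign, neg_smul]
  linear_combination key / 2

/-- The pairing functional `f ↦ coeff δ (altPoly f)`. -/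
noncomputable def Lf (δ : ι →₀ ℕ) (f : MvPolynomial ι ℂ) : ℂ :=
  MvPolynomial.coeff δ (altPoly f)

lemma Lf_add (δ : ι →₀ ℕ) (f g : MvPolynomial ι ℂ) :
    Lf δ (f + g) = Lf δ f + Lf δ g := by
  simp [Lf, altPoly, map_add, smul_add, Finset.sum_add_distrib]

lemma Lf_zero (δ : ι →₀ ℕ) : Lf δ (0 : MvPolynomial ι ℂ) = 0 := by
  simp [Lf, altPoly]

lemma altPoly_mul_symm (g f : MvPolynomial ι ℂ) (hf : MvPolynomial.IsSymmetric f) :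
    altPoly (g * f) = altPoly g * f := by
  unfold altPoly
  rw [Finset.sum_mul]
  refine Finset.sum_congr rfl fun σ _ => ?_
  rw [map_mul, hf σ, smul_mul_assoc]

omit [Fintype ι] in
lemma sum_single_apply (S : Finset ι) (a : ι) :
    (∑ i ∈ S, Finsupp.single i (1 : ℕ)) a = if a ∈ S then 1 else 0 := by
  rw [Finset.sum_apply']
  simp_rw [Finsupp.single_apply]
  exact Finset.sum_ite_eq' S a (fun _ => 1)

lemma Lf_mul_esymm (δ : ι →₀ ℕ)
    (hpred : ∀ a, 1 ≤ δ a → ∃ b, δ b + 1 = δ a)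
    (g : MvPolynomial ι ℂ) (k : ℕ) (hk : 1 ≤ k) :
    Lf δ (g * esymm ι ℂ k) = 0 := by
  unfold Lf
  rw [altPoly_mul_symm g _ (esymm_isSymmetric ι ℂ k), esymm_eq_sum_monomial,
    Finset.mul_sum, MvPolynomial.coeff_sum]
  refine Finset.sum_eq_zero fun S hS => ?_
  set sS : ι →₀ ℕ := ∑ i ∈ S, Finsupp.single i 1 with hsS
  rw [MvPolynomial.coeff_mul_monomial']
  split_ifs with hle
  · rw [mul_one]
    have hScard : S.card = k := (Finset.mem_powersetCard.mp hS).2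
    have hSne : S.Nonempty := Finset.card_pos.mp (by omega)
    obtain ⟨s₀, hs₀S, hs₀min⟩ := Finset.exists_min_image S δ hSne
    have h1 : sS s₀ = 1 := by rw [hsS, sum_single_apply, if_pos hs₀S]
    have hδs₀ : 1 ≤ δ s₀ := by
      have := hle s₀
      omega
    obtain ⟨b, hb⟩ := hpred s₀ hδs₀
    have hbS : b ∉ S := fun hbS => by
      have := hs₀min b hbS
      omega
    have hbs₀ : b ≠ s₀ := fun h => by rw [h] at hb; omega
    have hb0 : sS b = 0 := by rw [hsS, sum_single_apply, if_neg hbS]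
    refine altPoly_coeff_eq_zero g _ hbs₀ ?_
    rw [Finsupp.tsub_apply, Finsupp.tsub_apply, h1, hb0]
    omega
  · rfl

lemma Lf_monomial_self (δ : ι →₀ ℕ) (hδ : Function.Injective ⇑δ) :
    Lf δ (MvPolynomial.monomial δ (1 : ℂ)) = 1 := by
  unfold Lf altPoly
  rw [MvPolynomial.coeff_sum]
  have hterm : ∀ σ : Equiv.Perm ι,
      MvPolynomial.coeff δ
          (((Equiv.Perm.sign σ : ℤ) : ℂ) • rename (⇑σ) (MvPolynomial.monomial δ (1 : ℂ)))
        = if σ = 1 then 1 else 0 := by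
    intro σ
    rw [MvPolynomial.coeff_smul, MvPolynomial.rename_monomial, MvPolynomial.coeff_monomial]
    by_cases hσ : σ = 1
    · subst hσ
      simp [Finsupp.mapDomain_id]
    · rw [if_neg, if_neg hσ, smul_zero]
      intro hmap
      apply hσ
      ext a
      have := Finsupp.mapDomain_apply (Equiv.injective σ) δ a
      rw [hmap] at this
      simpa using (hδ this.symm).symm
  simp_rw [hterm]
  simp

lemma rename_esymm_expand {R ι' κ : Type*} [Fintype κ] [DecidableEq κ] [CommSemiring R]
    (f : κ → ι') (r : ℕ) :
    rename f (esymm κ R r) = ∑ A ∈ powersetCard r univ, ∏ i ∈ A, MvPolynomial.X (f i) := by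
  rw [esymm, map_sum]
  refine Finset.sum_congr rfl fun A _ => ?_
  rw [map_prod]
  simp [MvPolynomial.rename_X]

lemma esymm_sum_decomp {ι₁ ι₂ : Type*} [Fintype ι₁] [DecidableEq ι₁] [Fintype ι₂]
    [DecidableEq ι₂] (k : ℕ) :
    esymm (ι₁ ⊕ ι₂) ℂ k =
      ∑ r ∈ Finset.range (k + 1),
        rename Sum.inl (esymm ι₁ ℂ r) * rename Sum.inr (esymm ι₂ ℂ (k - r)) := by
  have hrhs : ∀ r : ℕ,
      rename (Sum.inl : ι₁ → ι₁ ⊕ ι₂) (esymm ι₁ ℂ r) * rename Sum.inr (esymm ι₂ ℂ (k - r))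
        = ∑ z ∈ powersetCard r (univ : Finset ι₁) ×ˢ powersetCard (k - r) (univ : Finset ι₂),
            ((∏ i ∈ z.1, MvPolynomial.X (Sum.inl i : ι₁ ⊕ ι₂)) *
              ∏ j ∈ z.2, MvPolynomial.X (Sum.inr j)) := by
    intro r
    rw [rename_esymm_expand, rename_esymm_expand, Finset.sum_mul_sum,
      Finset.sum_product]
  calc esymm (ι₁ ⊕ ι₂) ℂ k
      = ∑ z ∈ (Finset.range (k + 1)).sigma
            (fun r => powersetCard r (univ : Finset ι₁) ×ˢ
              powersetCard (k - r) (univ : Finset ι₂)),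
          ((∏ i ∈ z.2.1, MvPolynomial.X (Sum.inl i : ι₁ ⊕ ι₂)) *
            ∏ j ∈ z.2.2, MvPolynomial.X (Sum.inr j)) := by
        rw [esymm]
        refine Finset.sum_nbij' (fun S => ⟨S.toLeft.card, (S.toLeft, S.toRight)⟩)
          (fun z => z.2.1.disjSum z.2.2) ?_ ?_ ?_ ?_ ?_
        · intro S hS
          rw [Finset.mem_powersetCard] at hS
          rw [Finset.mem_sigma, Finset.mem_range, Finset.mem_product,
            Finset.mem_powersetCard, Finset.mem_powersetCard]
          dsimp only
          have hc := Finset.card_toLeft_add_card_toRight (u := S)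
          exact ⟨by omega, ⟨Finset.subset_univ _, rfl⟩, Finset.subset_univ _, by omega⟩
        · rintro ⟨r, A, B⟩ hz
          rw [Finset.mem_sigma, Finset.mem_range, Finset.mem_product,
            Finset.mem_powersetCard, Finset.mem_powersetCard] at hz
          rw [Finset.mem_powersetCard]
          refine ⟨Finset.subset_univ _, ?_⟩
          rw [Finset.card_disjSum]
          omega
        · intro S _
          exact Finset.toLeft_disjSum_toRight
        · rintro ⟨r, A, B⟩ hz
          rw [Finset.mem_sigma, Finset.mem_range, Finset.mem_product,
            Finset.mem_powersetCard, Finset.mem_powersetCard] at hz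
          obtain ⟨-, ⟨-, hA⟩, -⟩ := hz
          simp only at hA
          dsimp only
          simp only [Finset.toLeft_disjSum, Finset.toRight_disjSum]
          subst hA
          rfl
        · intro S hS
          conv_lhs => rw [← Finset.toLeft_disjSum_toRight (u := S)]
          rw [Finset.prod_disjSum]
    _ = ∑ r ∈ Finset.range (k + 1),
          ∑ z ∈ powersetCard r (univ : Finset ι₁) ×ˢ
              powersetCard (k - r) (univ : Finset ι₂),
            ((∏ i ∈ z.1, MvPolynomial.X (Sum.inl i : ι₁ ⊕ ι₂)) *
              ∏ j ∈ z.2, MvPolynomial.X (Sum.inr j)) :=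
        Finset.sum_sigma _ _ _
    _ = _ := Finset.sum_congr rfl fun r _ => (hrhs r).symm

lemma monomial_eq_prod_pow (δ : ι →₀ ℕ) :
    MvPolynomial.monomial δ (1 : ℂ) = ∏ a : ι, MvPolynomial.X a ^ δ a := by
  rw [MvPolynomial.monomial_eq, MvPolynomial.C_1, one_mul, Finsupp.prod_fintype]
  intro a
  exact pow_zero _

end AuxStmt7

/-- (Lemma `unitl`) For `1 ≤ p ≤ q`, the `p`-th power `e_q(y)^p` of the top
elementary symmetric polynomial in the `y`-variables does not lie in `J_{p,q}`:
`τ_q^p` generates the top-degree cohomology (degree `2pq`) of the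
Grassmannian `U(p+q)/(U(p)×U(q))`. -/
theorem stmt_7 (p q : ℕ) (hp : 1 ≤ p) (hpq : p ≤ q) :
    (ey p q q) ^ p ∉ Jpq p q := by
  intro h
  set δ : (Fin p ⊕ Fin q) →₀ ℕ :=
    Finsupp.equivFunOnFinite.symm
      (Sum.elim (fun i : Fin p => (i : ℕ)) (fun j : Fin q => p + (j : ℕ))) with hδdef
  have hδa : ∀ a, δ a =
      Sum.elim (fun i : Fin p => (i : ℕ)) (fun j : Fin q => p + (j : ℕ)) a := fun a => rfl
  -- injectivity of δ
  have hinj : Function.Injective ⇑δ := by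
    intro a b hab
    rcases a with i | i <;> rcases b with j | j <;>
      simp only [hδa, Sum.elim_inl, Sum.elim_inr] at hab
    · exact congrArg Sum.inl (Fin.ext hab)
    · exact absurd hab (by have := i.isLt; omega)
    · exact absurd hab (by have := j.isLt; omega)
    · exact congrArg Sum.inr (Fin.ext (by omega))
  -- predecessor-closed
  have hpred : ∀ a, 1 ≤ δ a → ∃ b, δ b + 1 = δ a := by
    intro a ha
    rcases a with i | j
    · have hi : 1 ≤ (i : ℕ) := by simpa [hδa] using ha
      refine ⟨Sum.inl ⟨(i : ℕ) - 1, by have := i.isLt; omega⟩, ?_⟩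
      simp only [hδa, Sum.elim_inl]
      omega
    · rcases Nat.eq_zero_or_pos (j : ℕ) with hj | hj
      · refine ⟨Sum.inl ⟨p - 1, by omega⟩, ?_⟩
        simp only [hδa, Sum.elim_inl, Sum.elim_inr]
        omega
      · refine ⟨Sum.inr ⟨(j : ℕ) - 1, by have := j.isLt; omega⟩, ?_⟩
        simp only [hδa, Sum.elim_inr]
        omega
  -- the complement monomial
  set W : MvPolynomial (Fin p ⊕ Fin q) ℂ :=
    (∏ i : Fin p, X (Sum.inl i) ^ (i : ℕ)) * ∏ j : Fin q, X (Sum.inr j) ^ (j : ℕ) with hW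
  -- e_q(y) as a product
  have hey : ey p q q = ∏ j : Fin q, X (Sum.inr j : Fin p ⊕ Fin q) := by
    have hpc : Finset.powersetCard q (Finset.univ : Finset (Fin q)) = {Finset.univ} := by
      have h2 := Finset.powersetCard_self (Finset.univ : Finset (Fin q))
      rwa [Finset.card_fin] at h2
    rw [ey, esymm, hpc, Finset.sum_singleton, map_prod]
    simp [rename_X]
  have hmono : W * (ey p q q) ^ p = monomial δ (1 : ℂ) := by
    rw [monomial_eq_prod_pow, Fintype.prod_sum_type, hey, hW, ← Finset.prod_pow]
    simp only [hδa, Sum.elim_inl, Sum.elim_inr]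
    rw [mul_assoc]
    congr 1
    rw [← Finset.prod_mul_distrib]
    refine Finset.prod_congr rfl fun j _ => ?_
    rw [← pow_add, Nat.add_comm]
  -- the vanishing ideal
  have hJ : Jpq p q ≤ {
      carrier := {f | ∀ g, Lf δ (g * f) = 0}
      add_mem' := fun {f₁ f₂} h₁ h₂ g => by
        rw [mul_add, Lf_add, h₁ g, h₂ g, add_zero]
      zero_mem' := fun g => by rw [mul_zero, Lf_zero]
      smul_mem' := fun r f hf g => by
        rw [smul_eq_mul, ← mul_assoc]
        exact hf (g * r) } := by
    rw [Jpq, Ideal.span_le]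
    rintro f ⟨k, hk1, _, rfl⟩
    intro g
    have hck : ck p q k = esymm (Fin p ⊕ Fin q) ℂ k := by
      rw [ck, esymm_sum_decomp]
      rfl
    rw [hck]
    exact Lf_mul_esymm δ hpred g k hk1
  have h0 : Lf δ (W * (ey p q q) ^ p) = 0 := hJ h W
  rw [hmono, Lf_monomial_self δ hinj] at h0
  exact one_ne_zero h0
end

section
/- Let n ≥ 2 and let V be the ℂ-vector space with basis vectors e₃, e₅, …, e_{2n−1} (one basis vector e_{2i+1} for i = 1,…,n−1). For each composition (m₁,…,m_k) of n with k ≥ 2 and every m_j ≥ 1, let W be the ℂ-vector space with basis {e_{2i+1}^{(j)} : 1 ≤ j ≤ k, 1 ≤ i ≤ m_j − 1}, and let L : V → W be the linear map sending e_{2i+1} to Σ_j e_{2i+1}^{(j)}, the sum over those j with i ≤ m_j − 1; let ΛL : ΛV → ΛW be the induced map of exterior algebras. Then an element v ∈ ΛV satisfies ΛL(v) = 0 for every such composition if and only if v lies in the ideal of ΛV generated by e_{2n−1}. -/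
/-- The generators of the exterior algebra on the space `Fin (n-1) → ℂ`:
`gen (n-1) t` is `ι` of the `t`-th standard basis vector (and `0` out of
range). The index `t` encodes the primitive generator `e_{2(t+1)+1}`, so that
`gen (n-1) 0, …, gen (n-1) (n-2)` are `e₃, e₅, …, e_{2n-1}`, the generators of
the cohomology of `SU(n)`. -/
noncomputable def gen (m t : ℕ) : ExteriorAlgebra ℂ (Fin m → ℂ) :=
  if h : t < m then ExteriorAlgebra.ι ℂ (Pi.single (⟨t, h⟩ : Fin m) 1) else 0

/-- For a composition `(m₁, …, m_k)` of `n`, the linear map `L : V → W` from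
the span `V` of `e₃, …, e_{2n-1}` to the span `W` of the generators
`e^{(j)}_{2i+1}` (`1 ≤ j ≤ k`, `1 ≤ i ≤ m_j - 1`, encoded by the index
`⟨j, i-1⟩ : Σ j : Fin k, Fin (m j - 1)`), sending `e_{2i+1}` to the sum of the
`e^{(j)}_{2i+1}` over those `j` with `i ≤ m_j - 1`. -/
noncomputable def L (n k : ℕ) (m : Fin k → ℕ) :
    (Fin (n - 1) → ℂ) →ₗ[ℂ] ((Σ j : Fin k, Fin (m j - 1)) → ℂ) where
  toFun v := fun p => if h : (p.2 : ℕ) < n - 1 then v ⟨(p.2 : ℕ), h⟩ else 0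
  map_add' u v := by
    funext p
    by_cases h : (p.2 : ℕ) < n - 1 <;> simp [h]
  map_smul' c v := by
    funext p
    by_cases h : (p.2 : ℕ) < n - 1 <;> simp [h]

/-!
Every part of a composition of `n` with at least two parts is at most `n - 1`, so `L` kills
`e_{2n-1}`, and hence `ΛL` kills the ideal it generates. Conversely, for the composition
`(n - 1, 1)` the map `L` has a linear left inverse up to multiples of `e_{2n-1}`; the induced
algebra endomorphism of `ΛV` is then the identity modulo the ideal of `e_{2n-1}`, so anything
killed by `ΛL` lies in that ideal.
-/

namespace ExteriorAlgebra

variable {R M N : Type*} [CommRing R] [AddCommGroup M] [Module R M] [AddCommGroup N]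
  [Module R N]

theorem exists_ι_mul_eq_mul_ι (x : M) (b : ExteriorAlgebra R M) :
    ∃ c, ι R x * b = c * ι R x := by
  induction b using ExteriorAlgebra.induction with
  | algebraMap r => exact ⟨algebraMap R _ r, (Algebra.commutes r _).symm⟩
  | ι u =>
    exact ⟨-ι R u, by rw [neg_mul]; exact eq_neg_of_add_eq_zero_left (ι_add_mul_swap x u)⟩
  | mul a b ha hb =>
    obtain ⟨ca, hca⟩ := ha
    obtain ⟨cb, hcb⟩ := hb
    exact ⟨ca * cb, by rw [← mul_assoc, hca, mul_assoc, hcb, ← mul_assoc]⟩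
  | add a b ha hb =>
    obtain ⟨ca, hca⟩ := ha
    obtain ⟨cb, hcb⟩ := hb
    exact ⟨ca + cb, by rw [mul_add, hca, hcb, add_mul]⟩

theorem mul_mem_span_ι {x : M} {a : ExteriorAlgebra R M} (ha : a ∈ Ideal.span {ι R x})
    (b : ExteriorAlgebra R M) : a * b ∈ Ideal.span {ι R x} := by
  obtain ⟨c, rfl⟩ := Ideal.mem_span_singleton'.mp ha
  obtain ⟨d, hd⟩ := exists_ι_mul_eq_mul_ι x b
  exact Ideal.mem_span_singleton'.mpr ⟨c * d, by rw [mul_assoc, mul_assoc, hd]⟩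

theorem sub_map_mem_span_ι {f : M →ₗ[R] M} {x : M} (hf : ∀ u, u - f u ∈ R ∙ x)
    (w : ExteriorAlgebra R M) : w - map f w ∈ Ideal.span {ι R x} := by
  induction w using ExteriorAlgebra.induction with
  | algebraMap r => simp
  | ι u =>
    obtain ⟨r, hr⟩ := Submodule.mem_span_singleton.mp (hf u)
    rw [map_apply_ι, ← map_sub, ← hr, map_smul]
    exact Submodule.smul_of_tower_mem _ _ (Ideal.mem_span_singleton_self _)
  | mul a b ha hb =>
    have hsplit : a * b - map f (a * b) = (a - map f a) * b + map f a * (b - map f b) := by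
      rw [map_mul, sub_mul, mul_sub, sub_add_sub_cancel]
    rw [hsplit]
    exact add_mem (mul_mem_span_ι ha b) (Ideal.mul_mem_left _ _ hb)
  | add a b ha hb =>
    rw [map_add, add_sub_add_comm]
    exact add_mem ha hb

theorem mem_span_ι_of_map_eq_zero {g : M →ₗ[R] N} (s : N →ₗ[R] M) {x : M}
    (hs : ∀ u, u - s (g u) ∈ R ∙ x) {v : ExteriorAlgebra R M} (hv : map g v = 0) :
    v ∈ Ideal.span {ι R x} := by
  have hmap : map (s ∘ₗ g) v = 0 := by
    rw [← map_comp_map, AlgHom.comp_apply, hv, map_zero]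
  simpa [hmap] using sub_map_mem_span_ι (f := s ∘ₗ g) hs v

theorem map_eq_zero_of_mem_span_ι {g : M →ₗ[R] N} {x : M} (hx : g x = 0)
    {v : ExteriorAlgebra R M} (hv : v ∈ Ideal.span {ι R x}) : map g v = 0 := by
  obtain ⟨c, rfl⟩ := Ideal.mem_span_singleton'.mp hv
  rw [map_mul, map_apply_ι, hx, map_zero, mul_zero]

end ExteriorAlgebra

theorem le_sub_one_of_sum_eq {n k : ℕ} (hk : 2 ≤ k) {m : Fin k → ℕ} (hm : ∀ j, 1 ≤ m j)
    (hsum : ∑ j, m j = n) (j : Fin k) : m j ≤ n - 1 := by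
  have hrest : k - 1 ≤ ∑ i ∈ Finset.univ.erase j, m i := by
    simpa [Finset.card_erase_of_mem] using
      Finset.card_nsmul_le_sum (Finset.univ.erase j) m 1 fun i _ => hm i
  have := Finset.add_sum_erase Finset.univ m (Finset.mem_univ j)
  omega

theorem L_single_top_eq_zero {n k : ℕ} {m : Fin k → ℕ} (hm : ∀ j, m j ≤ n - 1)
    (h : n - 2 < n - 1) : L n k m (Pi.single ⟨n - 2, h⟩ 1) = 0 := by
  funext p
  have hp := p.2.isLt
  have hmp := hm p.1
  simp only [L, LinearMap.coe_mk, AddHom.coe_mk, Pi.zero_apply]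
  split_ifs
  · exact Pi.single_eq_of_ne (fun hEq => by have := congrArg Fin.val hEq; simp at this; omega) 1
  · rfl

noncomputable def firstBlock (n : ℕ) :
    ((Σ j : Fin 2, Fin (![n - 1, 1] j - 1)) → ℂ) →ₗ[ℂ] (Fin (n - 1) → ℂ) :=
  LinearMap.pi fun t =>
    if h : (t : ℕ) < n - 2 then LinearMap.proj ⟨0, ⟨t, by simp; omega⟩⟩ else 0

theorem sub_firstBlock_L_mem_span {n : ℕ} (h : n - 2 < n - 1) (u : Fin (n - 1) → ℂ) :
    u - firstBlock n (L n 2 ![n - 1, 1] u) ∈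
      ℂ ∙ (Pi.single ⟨n - 2, h⟩ 1 : Fin (n - 1) → ℂ) := by
  refine Submodule.mem_span_singleton.mpr ⟨u ⟨n - 2, h⟩, funext fun t => ?_⟩
  by_cases ht : (t : ℕ) < n - 2
  · have hne : t ≠ ⟨n - 2, h⟩ := fun hEq => by simp [hEq] at ht
    simp [firstBlock, L, ht, hne, t.isLt]
  · have hEq : t = ⟨n - 2, h⟩ := Fin.ext (by have := t.isLt; simp; omega)
    subst hEq
    simp [firstBlock]

/-- (Section 3.1) An element `v` of the exterior algebra on `e₃, …, e_{2n-1}`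
(the cohomology of `SU(n)`, compact dual for `R_{E/ℚ}(SL_n)`) restricts
trivially to the compact dual of every proper Levi subgroup — i.e. is killed
by the map of exterior algebras induced by `L` for every composition
`(m₁, …, m_k)` of `n` with `k ≥ 2` and all `m_j ≥ 1` — if and only if `v`
lies in the ideal generated by `e_{2n-1} = gen (n-1) (n-2)`. -/
theorem stmt_14 (n : ℕ) (hn : 2 ≤ n) (v : ExteriorAlgebra ℂ (Fin (n - 1) → ℂ)) :
    (∀ (k : ℕ), 2 ≤ k → ∀ (m : Fin k → ℕ), (∀ j, 1 ≤ m j) → ∑ j, m j = n →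
      ExteriorAlgebra.map (L n k m) v = 0) ↔
      v ∈ Ideal.span {gen (n - 1) (n - 2)} := by
  have htop : n - 2 < n - 1 := by omega
  rw [gen, dif_pos htop]
  constructor
  · intro hv
    refine ExteriorAlgebra.mem_span_ι_of_map_eq_zero (firstBlock n)
      (sub_firstBlock_L_mem_span htop) (hv 2 le_rfl ![n - 1, 1] ?_ ?_)
    · intro j; fin_cases j <;> simp; omega
    · simp; omega
  · intro hv k hk m hm hsum
    exact ExteriorAlgebra.map_eq_zero_of_mem_span_ι
      (L_single_top_eq_zero (le_sub_one_of_sum_eq hk hm hsum) htop) hv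
end
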